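/- arXiv:2106.02713 — 10 statements merged into one kernel-verified Lean document; each statement's English description precedes it below -/
import Mathlib

section
/- Let N ≥ 1, let ψ₁, …, ψ_m be i.i.d. random vectors in ℝ^N, each distributed as the centered multivariate Gaussian with positive-definite covariance matrix Σ, let η > 0, and let Δ ∈ ℝ^N be a fixed vector with C = ΔΔᵀ. Define the one-step SGD update Δ' = Δ − (η/m) Σ_{i=1}^m ψᵢ (ψᵢᵀ Δ). Then E[Δ' Δ'ᵀ] = (I − ηΣ) C (I − ηΣ) + (η²/m) [ Σ C Σ + Σ · Tr(Σ C) ]. -/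
/-!
Each summand `ψₐ (ψₐ ⬝ᵥ Δ)` of the update is an i.i.d. copy of `f(ψ) = ψ ψᵀ Δ`, so the second
moment of `Δ' = Δ - η · (empirical mean of f)` splits into the outer square of its mean
`Δ - η E[f] = (I - ηΣ) Δ` plus `η² / m` times the covariance of `f`.  Writing `ψ = B X` with `X`
standard Gaussian, all moments involved are moments of linear forms `u ⬝ᵥ X`: the second moment
is `u ⬝ᵥ w`, and Isserlis' formula for four of them gives
`E[fᵢ fⱼ] = 2 (ΣΔ)ᵢ (ΣΔ)ⱼ + Σᵢⱼ ΔᵀΣΔ`.  Both follow from Gaussian integration by parts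
`E[(u ⬝ᵥ X) p(X)] = E[(∂ᵤ p)(X)]` for polynomials `p`; by independence of the coordinates this
reduces to the one-dimensional recursion `E[x^(n+2)] = (n+1) E[x^n]`, an integration by parts
against the density.
-/

open MeasureTheory ProbabilityTheory Matrix
open scoped NNReal

lemma integrable_pow_gaussianReal (μ : ℝ) (v : ℝ≥0) (n : ℕ) :
    Integrable (fun x => x ^ n) (gaussianReal μ v) :=
  integrable_pow_of_integrable_exp_mul (X := id) one_ne_zero
    (integrable_exp_mul_gaussianReal 1) (integrable_exp_mul_gaussianReal (-1)) n

lemma integrable_pow_mul_gaussianPDFReal (μ : ℝ) {v : ℝ≥0} (hv : v ≠ 0) (n : ℕ) :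
    Integrable (fun x => x ^ n * gaussianPDFReal μ v x) := by
  have h := integrable_pow_gaussianReal μ v n
  rw [gaussianReal_of_var_ne_zero _ hv, integrable_withDensity_iff_integrable_smul'
    (measurable_gaussianPDF _ _) (ae_of_all _ fun _ => gaussianPDF_lt_top)] at h
  simpa only [toReal_gaussianPDF, smul_eq_mul, mul_comm] using h

lemma hasDerivAt_gaussianPDFReal (μ : ℝ) (v : ℝ≥0) (x : ℝ) :
    HasDerivAt (gaussianPDFReal μ v) (-((x - μ) / v) * gaussianPDFReal μ v x) x := by
  have hexp : HasDerivAt (fun y => -(y - μ) ^ 2 / (2 * v)) (-((x - μ) / v)) x :=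
    (((hasDerivAt_pow 2 (x - μ)).comp_sub_const x μ).fun_neg.div_const (2 * (v : ℝ))).congr_deriv
      (by push_cast; ring)
  rw [gaussianPDFReal_def]
  exact (hexp.exp.const_mul _).congr_deriv (by ring)

theorem integral_pow_add_two_gaussianReal (v : ℝ≥0) (n : ℕ) :
    ∫ x, x ^ (n + 2) ∂gaussianReal 0 v = (n + 1) * v * ∫ x, x ^ n ∂gaussianReal 0 v := by
  rcases eq_or_ne v 0 with rfl | hv
  · simp
  have hibp := integral_mul_deriv_eq_deriv_mul_of_integrable
    (u := fun x => x ^ (n + 1)) (u' := fun x => (n + 1 : ℝ) * x ^ n)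
    (v := gaussianPDFReal 0 v) (v' := fun x => -((x - 0) / v) * gaussianPDFReal 0 v x)
    (fun x _ => by simpa using hasDerivAt_pow (n + 1) x)
    (fun x _ => hasDerivAt_gaussianPDFReal 0 v x)
    (((integrable_pow_mul_gaussianPDFReal 0 hv (n + 2)).div_const v).neg.congr
      (ae_of_all _ fun x => by simp only [Pi.mul_apply, Pi.neg_apply]; ring))
    (((integrable_pow_mul_gaussianPDFReal 0 hv n).const_mul (n + 1)).congr
      (ae_of_all _ fun x => by simp only [Pi.mul_apply]; ring))
    (integrable_pow_mul_gaussianPDFReal 0 hv (n + 1))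
  have hv' : (v : ℝ) ≠ 0 := mod_cast hv
  simp only [integral_gaussianReal_eq_integral_smul hv, smul_eq_mul]
  calc ∫ x, gaussianPDFReal 0 v x * x ^ (n + 2)
      = -v * ∫ x, x ^ (n + 1) * (-((x - 0) / v) * gaussianPDFReal 0 v x) := by
        rw [← integral_const_mul]; congr 1; ext x; field_simp; ring
    _ = (n + 1) * v * ∫ x, gaussianPDFReal 0 v x * x ^ n := by
        rw [hibp, neg_mul_neg, ← integral_const_mul, ← integral_const_mul]; congr 1; ext x; ring

theorem integral_pow_succ_gaussianReal (v : ℝ≥0) (n : ℕ) :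
    ∫ x, x ^ (n + 1) ∂gaussianReal 0 v = n * v * ∫ x, x ^ (n - 1) ∂gaussianReal 0 v := by
  cases n with
  | zero => simp
  | succ n => simpa using integral_pow_add_two_gaussianReal v n

local notation "γ" => Measure.pi fun _ => gaussianReal 0 1

namespace StdGaussian

open MvPolynomial

variable {ι : Type*} [Fintype ι]

lemma integrable_eval (P : MvPolynomial ι ℝ) :
    Integrable (fun y => eval y P) γ := by
  simp_rw [eval_eq']
  exact integrable_finsetSum _ fun d _ =>
    (Integrable.fintype_prod fun i => integrable_pow_gaussianReal 0 1 (d i)).const_mul _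

lemma integrable_coord_mul_eval (k : ι) (P : MvPolynomial ι ℝ) :
    Integrable (fun y => y k * eval y P) γ := by
  have := integrable_eval (X k * P)
  simpa using this

lemma integral_prod_pow (e : ι → ℕ) :
    ∫ y, ∏ i, y i ^ e i ∂γ = ∏ i, ∫ x, x ^ e i ∂gaussianReal 0 1 :=
  integral_fintype_prod_eq_prod fun i x => x ^ e i

lemma integral_mul_eval_monomial (k : ι) (d : ι →₀ ℕ) (a : ℝ) :
    ∫ y, y k * eval y (monomial d a) ∂γ = ∫ y, eval y (pderiv k (monomial d a)) ∂γ := by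
  classical
  have hmul : ∀ y : ι → ℝ,
      y k * eval y (monomial d a) = a * ∏ i, y i ^ (d i + if i = k then 1 else 0) := by
    intro y
    simp only [eval_monomial, Finsupp.prod_pow, pow_add, Finset.prod_mul_distrib, pow_ite, pow_one,
      pow_zero, Finset.prod_ite_eq', Finset.mem_univ, if_true]
    ring
  simp_rw [hmul, pderiv_monomial, eval_monomial, Finsupp.prod_pow, integral_const_mul,
    integral_prod_pow, Fintype.prod_eq_mul_prod_compl k]
  have hoff : ∏ i ∈ {k}ᶜ, ∫ x, x ^ (d i + if i = k then 1 else 0) ∂gaussianReal 0 1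
      = ∏ i ∈ {k}ᶜ, ∫ x, x ^ (d - Finsupp.single k 1 : ι →₀ ℕ) i ∂gaussianReal 0 1 :=
    Finset.prod_congr rfl fun i hi => by
      have hik : i ≠ k := by simpa using hi
      simp [hik]
  rw [hoff, if_pos trivial, integral_pow_succ_gaussianReal]
  simp
  ring

theorem integral_mul_eval_eq_integral_eval_pderiv (k : ι) (P : MvPolynomial ι ℝ) :
    ∫ y, y k * eval y P ∂γ = ∫ y, eval y (pderiv k P) ∂γ := by
  induction P using MvPolynomial.induction_on' with
  | monomial d a => exact integral_mul_eval_monomial k d a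
  | add P Q hP hQ =>
    simp only [map_add, mul_add]
    rw [integral_add (integrable_coord_mul_eval k P) (integrable_coord_mul_eval k Q),
      integral_add (integrable_eval _) (integrable_eval _), hP, hQ]

noncomputable def dirDeriv (u : ι → ℝ) : Derivation ℝ (MvPolynomial ι ℝ) (MvPolynomial ι ℝ) :=
  ∑ k, u k • pderiv k

lemma dirDeriv_apply (u : ι → ℝ) (P : MvPolynomial ι ℝ) :
    dirDeriv u P = ∑ k, u k • pderiv k P := by
  rw [dirDeriv, ← Derivation.coeFnAddMonoidHom_apply, map_sum, Finset.sum_apply]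
  rfl

theorem integral_dotProduct_mul_eval (u : ι → ℝ) (P : MvPolynomial ι ℝ) :
    ∫ y, (u ⬝ᵥ y) * eval y P ∂γ = ∫ y, eval y (dirDeriv u P) ∂γ := by
  calc ∫ y, (u ⬝ᵥ y) * eval y P ∂γ = ∫ y, ∑ k, u k * (y k * eval y P) ∂γ := by
        simp only [dotProduct, Finset.sum_mul, mul_assoc]
    _ = ∑ k, u k * ∫ y, eval y (pderiv k P) ∂γ := by
        simp only [integral_finsetSum _ fun k _ => (integrable_coord_mul_eval k P).const_mul (u k),
          integral_const_mul, integral_mul_eval_eq_integral_eval_pderiv]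
    _ = ∫ y, eval y (dirDeriv u P) ∂γ := by
        simp only [dirDeriv_apply, map_sum, smul_eval]
        rw [integral_finsetSum _ fun k _ => (integrable_eval _).const_mul (u k)]
        simp only [integral_const_mul]

noncomputable def linPoly (u : ι → ℝ) : MvPolynomial ι ℝ := ∑ k, C (u k) * X k

@[simp] lemma eval_linPoly (u y : ι → ℝ) : eval y (linPoly u) = u ⬝ᵥ y := by
  simp [linPoly, dotProduct]

@[simp] lemma dirDeriv_linPoly (u w : ι → ℝ) : dirDeriv u (linPoly w) = C (u ⬝ᵥ w) := by
  classical
  simp [dirDeriv_apply, linPoly, dotProduct, Pi.single_apply, smul_eq_C_mul, mul_comm]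

lemma integrable_dotProduct_mul_dotProduct (u w : ι → ℝ) :
    Integrable (fun y => (u ⬝ᵥ y) * (w ⬝ᵥ y)) γ := by
  have := integrable_eval (linPoly u * linPoly w)
  simpa using this

theorem integral_dotProduct_mul_dotProduct (u w : ι → ℝ) :
    ∫ y, (u ⬝ᵥ y) * (w ⬝ᵥ y) ∂γ = u ⬝ᵥ w := by
  simpa using integral_dotProduct_mul_eval u (linPoly w)

lemma integrable_mul_four_dotProduct (u w u' w' : ι → ℝ) :
    Integrable (fun y => (u ⬝ᵥ y) * (w ⬝ᵥ y) * (u' ⬝ᵥ y) * (w' ⬝ᵥ y)) γ := by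
  have := integrable_eval (linPoly u * linPoly w * linPoly u' * linPoly w')
  simpa using this

theorem integral_mul_four_dotProduct (u w u' w' : ι → ℝ) :
    ∫ y, (u ⬝ᵥ y) * (w ⬝ᵥ y) * (u' ⬝ᵥ y) * (w' ⬝ᵥ y) ∂γ
      = (u ⬝ᵥ w) * (u' ⬝ᵥ w') + (u ⬝ᵥ u') * (w ⬝ᵥ w') + (u ⬝ᵥ w') * (w ⬝ᵥ u') := by
  have h := integral_dotProduct_mul_eval u (linPoly w * linPoly u' * linPoly w')
  simp only [map_mul, eval_linPoly, Derivation.leibniz, dirDeriv_linPoly, smul_eq_mul, map_add,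
    eval_C] at h
  have hI := integrable_dotProduct_mul_dotProduct (ι := ι)
  calc ∫ y, (u ⬝ᵥ y) * (w ⬝ᵥ y) * (u' ⬝ᵥ y) * (w' ⬝ᵥ y) ∂γ
      = ∫ y, (u ⬝ᵥ w') * ((w ⬝ᵥ y) * (u' ⬝ᵥ y)) + (u ⬝ᵥ u') * ((w ⬝ᵥ y) * (w' ⬝ᵥ y))
          + (u ⬝ᵥ w) * ((u' ⬝ᵥ y) * (w' ⬝ᵥ y)) ∂γ := by
        simp only [mul_assoc] at h ⊢
        rw [h]; congr 1; ext y; ring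
    _ = _ := by
        rw [integral_add (by exact ((hI _ _).const_mul _).add ((hI _ _).const_mul _))
          ((hI _ _).const_mul _), integral_add ((hI _ _).const_mul _) ((hI _ _).const_mul _)]
        simp only [integral_const_mul, integral_dotProduct_mul_dotProduct]
        ring

end StdGaussian

section Sample

variable {Ω : Type*} [MeasurableSpace Ω] {μ : Measure Ω} [IsProbabilityMeasure μ]
  {ι : Type*} [Fintype ι]

lemma integral_sum_comp_eval {f : Ω → ℝ} (hf : Integrable f μ) :
    ∫ x, ∑ a, f (x a) ∂Measure.pi (fun _ : ι => μ) = Fintype.card ι * ∫ y, f y ∂μ := by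
  rw [integral_finsetSum _ fun a _ => integrable_comp_eval hf]
  simp [integral_comp_eval (μ := fun _ : ι => μ) hf.aestronglyMeasurable]

lemma indepFun_comp_eval {f g : Ω → ℝ} (hf : AEMeasurable f μ) (hg : AEMeasurable g μ)
    {a b : ι} (hab : a ≠ b) :
    IndepFun (fun x => f (x a)) (fun x => g (x b)) (Measure.pi fun _ : ι => μ) := by
  have hmap : ∀ c : ι, (Measure.pi fun _ : ι => μ).map (fun x => id (x c)) = μ := fun c =>
    (measurePreserving_eval _ c).map_eq
  exact ((iIndepFun_pi (μ := fun _ : ι => μ) (X := fun _ : ι => id)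
    fun _ => aemeasurable_id).indepFun hab).comp₀
    (measurable_pi_apply a).aemeasurable (measurable_pi_apply b).aemeasurable
    (by rwa [hmap]) (by rwa [hmap])

lemma integrable_comp_eval_mul_comp_eval {f g : Ω → ℝ} (hf : Integrable f μ)
    (hg : Integrable g μ) (hfg : Integrable (fun y => f y * g y) μ) (a b : ι) :
    Integrable (fun x => f (x a) * g (x b)) (Measure.pi fun _ : ι => μ) := by
  by_cases hab : a = b
  · subst hab
    exact integrable_comp_eval (μ := fun _ : ι => μ) hfg
  · exact (indepFun_comp_eval hf.1.aemeasurable hg.1.aemeasurable hab).integrable_mul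
      (integrable_comp_eval hf) (integrable_comp_eval hg)

lemma integral_comp_eval_mul_comp_eval {f g : Ω → ℝ} (hf : AEStronglyMeasurable f μ)
    (hg : AEStronglyMeasurable g μ) {a b : ι} (hab : a ≠ b) :
    ∫ x, f (x a) * g (x b) ∂Measure.pi (fun _ : ι => μ) = (∫ y, f y ∂μ) * ∫ y, g y ∂μ :=
  ((indepFun_comp_eval hf.aemeasurable hg.aemeasurable hab).integral_fun_mul_eq_mul_integral
    (hf.comp_measurePreserving (measurePreserving_eval _ a))
    (hg.comp_measurePreserving (measurePreserving_eval _ b))).trans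
    (congrArg₂ (· * ·) (integral_comp_eval hf) (integral_comp_eval hg))

lemma integral_sum_mul_sum_comp_eval {f g : Ω → ℝ} (hf : Integrable f μ) (hg : Integrable g μ)
    (hfg : Integrable (fun y => f y * g y) μ) :
    ∫ x, (∑ a, f (x a)) * (∑ b, g (x b)) ∂Measure.pi (fun _ : ι => μ)
      = Fintype.card ι * ∫ y, f y * g y ∂μ
        + (Fintype.card ι ^ 2 - Fintype.card ι) * ((∫ y, f y ∂μ) * ∫ y, g y ∂μ) := by
  classical
  have hint := integrable_comp_eval_mul_comp_eval (ι := ι) hf hg hfg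
  have hterm : ∀ a b : ι, ∫ x, f (x a) * g (x b) ∂Measure.pi (fun _ : ι => μ)
      = (∫ y, f y ∂μ) * (∫ y, g y ∂μ)
        + if a = b then ∫ y, f y * g y ∂μ - (∫ y, f y ∂μ) * ∫ y, g y ∂μ else 0 := by
    intro a b
    split_ifs with hab
    · subst hab
      rw [integral_comp_eval (μ := fun _ : ι => μ) (f := fun y => f y * g y) hfg.1]
      ring
    · rw [add_zero, integral_comp_eval_mul_comp_eval hf.1 hg.1 hab]
  simp_rw [Finset.sum_mul_sum]
  rw [integral_finsetSum _ fun a _ => integrable_finsetSum _ fun b _ => hint a b]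
  simp_rw [integral_finsetSum _ fun b _ => hint _ b, hterm, Finset.sum_add_distrib,
    Finset.sum_ite_eq, Finset.mem_univ, if_true]
  simp
  ring

theorem integral_sub_mul_sub_sum_comp_eval {f g : Ω → ℝ} (hf : Integrable f μ)
    (hg : Integrable g μ) (hfg : Integrable (fun y => f y * g y) μ) (α β c : ℝ) :
    ∫ x, (α - c * ∑ a, f (x a)) * (β - c * ∑ a, g (x a)) ∂Measure.pi (fun _ : ι => μ)
      = (α - c * Fintype.card ι * ∫ y, f y ∂μ) * (β - c * Fintype.card ι * ∫ y, g y ∂μ)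
        + c ^ 2 * Fintype.card ι * (∫ y, f y * g y ∂μ - (∫ y, f y ∂μ) * ∫ y, g y ∂μ) := by
  have hF : Integrable (fun x : ι → Ω => ∑ a, f (x a)) (Measure.pi fun _ => μ) :=
    integrable_finsetSum _ fun a _ => integrable_comp_eval hf
  have hG : Integrable (fun x : ι → Ω => ∑ a, g (x a)) (Measure.pi fun _ => μ) :=
    integrable_finsetSum _ fun a _ => integrable_comp_eval hg
  have hFG : Integrable (fun x : ι → Ω => (∑ a, f (x a)) * ∑ b, g (x b))
      (Measure.pi fun _ => μ) := by
    simp_rw [Finset.sum_mul_sum]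
    exact integrable_finsetSum _ fun a _ => integrable_finsetSum _ fun b _ =>
      integrable_comp_eval_mul_comp_eval hf hg hfg a b
  have hexpand : ∀ x : ι → Ω, (α - c * ∑ a, f (x a)) * (β - c * ∑ a, g (x a))
      = α * β - (c * β) * ∑ a, f (x a) - (c * α) * ∑ a, g (x a)
        + c ^ 2 * ((∑ a, f (x a)) * ∑ b, g (x b)) := fun x => by ring
  simp_rw [hexpand]
  have hαF : Integrable (fun x : ι → Ω => α * β - (c * β) * ∑ a, f (x a))
      (Measure.pi fun _ => μ) := (integrable_const _).sub (hF.const_mul _)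
  rw [integral_add (by exact hαF.sub (hG.const_mul _)) (hFG.const_mul _),
    integral_sub hαF (hG.const_mul _), integral_sub (integrable_const _) (hF.const_mul _)]
  simp only [integral_const, integral_const_mul, integral_sum_comp_eval hf,
    integral_sum_comp_eval hg, integral_sum_mul_sum_comp_eval hf hg hfg]
  simp
  ring

end Sample

lemma Matrix.IsSymm.mul_vecMulVec_self_mul {n R : Type*} [Fintype n] [CommSemiring R]
    {M : Matrix n n R} (hM : M.IsSymm) (a : n → R) :
    M * vecMulVec a a * M = vecMulVec (M *ᵥ a) (M *ᵥ a) := by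
  rw [mul_vecMulVec, vecMulVec_mul, ← mulVec_transpose, hM.eq]

lemma Matrix.IsSymm.sgd_error_matrix_apply {n : Type*} [Fintype n] [DecidableEq n]
    {S : Matrix n n ℝ} (hS : S.IsSymm) (η c : ℝ) (Δ : n → ℝ) (i j : n) :
    ((1 - η • S) * vecMulVec Δ Δ * (1 - η • S)
        + c • (S * vecMulVec Δ Δ * S + (S * vecMulVec Δ Δ).trace • S)) i j
      = (Δ i - η * (S *ᵥ Δ) i) * (Δ j - η * (S *ᵥ Δ) j)
        + c * ((S *ᵥ Δ) i * (S *ᵥ Δ) j + ((S *ᵥ Δ) ⬝ᵥ Δ) * S i j) := by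
  rw [(isSymm_one.sub (hS.smul η)).mul_vecMulVec_self_mul, hS.mul_vecMulVec_self_mul,
    mul_vecMulVec, trace_vecMulVec]
  simp [sub_mulVec, smul_mulVec, vecMulVec_apply]
  ring

open StdGaussian in
theorem integral_sgd_error_mul_sgd_error {N m : ℕ} (hm : m ≠ 0) {S B : Matrix (Fin N) (Fin N) ℝ}
    (hB : B * Bᵀ = S) (η : ℝ) (Δ : Fin N → ℝ) (i j : Fin N) :
    ∫ X : Fin m → (Fin N → ℝ),
        (Δ i - (η / m) * ∑ a, (B *ᵥ X a) i * ((B *ᵥ X a) ⬝ᵥ Δ)) *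
        (Δ j - (η / m) * ∑ a, (B *ᵥ X a) j * ((B *ᵥ X a) ⬝ᵥ Δ))
      ∂(Measure.pi fun _ : Fin m => Measure.pi fun _ : Fin N => gaussianReal 0 1)
      = (Δ i - η * (S *ᵥ Δ) i) * (Δ j - η * (S *ᵥ Δ) j)
        + η ^ 2 / m * ((S *ᵥ Δ) i * (S *ᵥ Δ) j + ((S *ᵥ Δ) ⬝ᵥ Δ) * S i j) := by
  set v := Bᵀ *ᵥ Δ with hv
  have hψ : ∀ k (y : Fin N → ℝ), (B *ᵥ y) k * ((B *ᵥ y) ⬝ᵥ Δ) = (B k ⬝ᵥ y) * (v ⬝ᵥ y) :=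
    fun k y => by rw [dotProduct_comm, dotProduct_mulVec, ← mulVec_transpose]; rfl
  have hBv : B *ᵥ v = S *ᵥ Δ := by rw [hv, mulVec_mulVec, hB]
  have hBv' : ∀ k, B k ⬝ᵥ v = (S *ᵥ Δ) k := fun k => congrFun hBv k
  have hvv : v ⬝ᵥ v = (S *ᵥ Δ) ⬝ᵥ Δ := by rw [← hBv, ← vecMul_transpose, ← dotProduct_mulVec]
  have hBB : B i ⬝ᵥ B j = S i j := by rw [← hB]; rfl
  have h4 : ∫ y, B i ⬝ᵥ y * v ⬝ᵥ y * (B j ⬝ᵥ y * v ⬝ᵥ y) ∂(Measure.pi fun _ => gaussianReal 0 1)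
      = 2 * ((S *ᵥ Δ) i * (S *ᵥ Δ) j) + S i j * ((S *ᵥ Δ) ⬝ᵥ Δ) := by
    simp_rw [← mul_assoc]
    rw [integral_mul_four_dotProduct, hBv', hBv', hBB, hvv, dotProduct_comm v (B j), hBv']
    ring
  simp_rw [hψ]
  rw [integral_sub_mul_sub_sum_comp_eval (integrable_dotProduct_mul_dotProduct _ _)
    (integrable_dotProduct_mul_dotProduct _ _)
    (by simpa only [mul_assoc] using integrable_mul_four_dotProduct (B i) v (B j) v), h4,
    integral_dotProduct_mul_dotProduct, integral_dotProduct_mul_dotProduct, hBv', hBv',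
    Fintype.card_fin]
  have hm' : (m : ℝ) ≠ 0 := Nat.cast_ne_zero.mpr hm
  field_simp
  ring

theorem sgd_one_step_error_matrix_gaussian_general
    (N m : ℕ) (hm : 1 ≤ m)
    (S B : Matrix (Fin N) (Fin N) ℝ)
    (hB : B * Bᵀ = S)
    (η : ℝ)
    (Δ : Fin N → ℝ) (C : Matrix (Fin N) (Fin N) ℝ) (hC : C = vecMulVec Δ Δ) :
    ∀ i j : Fin N,
      (∫ X : Fin m → (Fin N → ℝ),
          (Δ i - (η / m) * ∑ a, (B.mulVec (X a)) i * ((B.mulVec (X a)) ⬝ᵥ Δ)) *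
          (Δ j - (η / m) * ∑ a, (B.mulVec (X a)) j * ((B.mulVec (X a)) ⬝ᵥ Δ))
        ∂(Measure.pi fun _ : Fin m => Measure.pi fun _ : Fin N => gaussianReal 0 1))
      = ((1 - η • S) * C * (1 - η • S)
          + (η ^ 2 / m) • (S * C * S + (S * C).trace • S)) i j := by
  intro i j
  rw [hC, (hB ▸ isSymm_mul_transpose_self B : S.IsSymm).sgd_error_matrix_apply,
    integral_sgd_error_mul_sgd_error (by omega) hB]

/-- Let `ψ₁, …, ψ_m` be i.i.d. centered Gaussian vectors in `ℝ^N` with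
positive-definite covariance `S` (realized as `ψᵢ = B *ᵥ Xᵢ` with `Xᵢ` i.i.d. standard
Gaussian vectors and `B * Bᵀ = S`), let `η > 0`, `Δ ∈ ℝ^N` fixed, `C = Δ Δᵀ`.  With the
one-step SGD update `Δ' = Δ − (η/m) ∑ᵢ ψᵢ (ψᵢᵀ Δ)`, the entrywise expectation
`E[Δ' Δ'ᵀ]` equals `(I − ηS) C (I − ηS) + (η²/m)[S C S + Tr(S C) • S]`. -/
theorem sgd_one_step_error_matrix_gaussian
    (N m : ℕ) (hN : 1 ≤ N) (hm : 1 ≤ m)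
    (S B : Matrix (Fin N) (Fin N) ℝ)
    (hS : S.PosDef) (hB : B * Bᵀ = S)
    (η : ℝ) (hη : 0 < η)
    (Δ : Fin N → ℝ) (C : Matrix (Fin N) (Fin N) ℝ) (hC : C = vecMulVec Δ Δ) :
    ∀ i j : Fin N,
      (∫ X : Fin m → (Fin N → ℝ),
          (Δ i - (η / m) * ∑ a, (B.mulVec (X a)) i * ((B.mulVec (X a)) ⬝ᵥ Δ)) *
          (Δ j - (η / m) * ∑ a, (B.mulVec (X a)) j * ((B.mulVec (X a)) ⬝ᵥ Δ))
        ∂(Measure.pi fun _ : Fin m => Measure.pi fun _ : Fin N => gaussianReal 0 1))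
      = ((1 - η • S) * C * (1 - η • S)
          + (η ^ 2 / m) • (S * C * S + (S * C).trace • S)) i j :=
  sgd_one_step_error_matrix_gaussian_general N m hm S B hB η Δ C hC
end

section
/- Let Σ = Σ_k λ_k u_k u_kᵀ ∈ ℝ^{N×N} with u₁,…,u_N an orthonormal basis of ℝ^N and λ_k ≥ 0; let η > 0 and m > 0. Suppose the matrix sequence (C_t)_{t∈ℕ} satisfies C_{t+1} = (I − ηΣ) C_t (I − ηΣ) + (η²/m)[Σ C_t Σ + Σ · Tr(Σ C_t)] with C₀ = Δ Δᵀ for some Δ ∈ ℝ^N, and set v_k = u_kᵀ Δ. Then for all t ∈ ℕ, Tr(Σ C_t) = λᵀ A(λ,η,m)^t v², where v² is the entrywise square of v = (v₁,…,v_N). -/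
/-!
Every `u k` is an eigenvector of the symmetric matrix `S`, with eigenvalue `lam k`. Hence the
diagonal coefficients `d t k = u kᵀ C_t u k` of `C_t` in the eigenbasis satisfy
`Tr(S C_t) = lamᵀ d t`, and the update rule for `C_t` acts on them linearly:
`d (t + 1) = A d t`. Since `d 0 = v²`, this gives `d t = Aᵗ v²`.
-/

open Matrix

/-- The matrix `A(λ,η,m) = (I − η diag(λ))² + (η²/m) diag(λ²) + (η²/m) λλᵀ`. -/
noncomputable def Amat (N : ℕ) (lam : Fin N → ℝ) (η m : ℝ) : Matrix (Fin N) (Fin N) ℝ :=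
  (1 - η • Matrix.diagonal lam) ^ 2 + (η ^ 2 / m) • Matrix.diagonal (fun k => (lam k) ^ 2)
    + (η ^ 2 / m) • vecMulVec lam lam

namespace Matrix

variable {κ n R : Type*} [Fintype κ]

section CommSemiring

variable [CommSemiring R]

theorem isSymm_sum_smul_vecMulVec_self (lam : κ → R) (u : κ → n → R) :
    (∑ k, lam k • vecMulVec (u k) (u k)).IsSymm := by
  simp only [IsSymm, transpose_sum, transpose_smul, transpose_vecMulVec]

variable [Fintype n]

theorem trace_vecMulVec_mul (x y : n → R) (C : Matrix n n R) :
    (vecMulVec x y * C).trace = y ⬝ᵥ C *ᵥ x := by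
  rw [vecMulVec_mul, trace_vecMulVec, dotProduct_comm, dotProduct_mulVec]

theorem trace_sum_smul_vecMulVec_self_mul (lam : κ → R) (u : κ → n → R) (C : Matrix n n R) :
    ((∑ k, lam k • vecMulVec (u k) (u k)) * C).trace = ∑ k, lam k * (u k ⬝ᵥ C *ᵥ u k) := by
  simp only [Finset.sum_mul, trace_sum, smul_mul_assoc, trace_smul, trace_vecMulVec_mul,
    smul_eq_mul]

theorem sum_smul_vecMulVec_self_mulVec_of_orthonormal [DecidableEq κ] {u : κ → n → R}
    (hu : ∀ k l, u k ⬝ᵥ u l = if k = l then 1 else 0) (lam : κ → R) (k : κ) :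
    (∑ l, lam l • vecMulVec (u l) (u l)) *ᵥ u k = lam k • u k := by
  simp only [sum_mulVec, smul_mulVec, vecMulVec_mulVec, hu, op_smul_eq_smul, ite_smul, one_smul,
    zero_smul, smul_ite, smul_zero, Finset.sum_ite_eq', Finset.mem_univ, if_true]

theorem dotProduct_mul_mul_mulVec_of_isSymm {A : Matrix n n R} (hA : A.IsSymm) {x : n → R}
    {a : R} (hx : A *ᵥ x = a • x) (C : Matrix n n R) :
    x ⬝ᵥ (A * C * A) *ᵥ x = a ^ 2 * (x ⬝ᵥ C *ᵥ x) := by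
  have hx' : x ᵥ* A = a • x := by rw [← mulVec_transpose, hA.eq, hx]
  rw [← mulVec_mulVec, ← mulVec_mulVec, dotProduct_mulVec, hx', hx, mulVec_smul, smul_dotProduct,
    dotProduct_smul, smul_eq_mul, smul_eq_mul]
  ring

end CommSemiring

theorem dotProduct_sgdCovUpdate_mulVec [CommRing R] [Fintype n] [DecidableEq n]
    {S : Matrix n n R} (hS : S.IsSymm) {x : n → R} {μ : R} (hx : S *ᵥ x = μ • x) (hxx : x ⬝ᵥ x = 1) (η c : R) (C : Matrix n n R) :
    x ⬝ᵥ ((1 - η • S) * C * (1 - η • S) + c • (S * C * S + (S * C).trace • S)) *ᵥ x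
      = (1 - η * μ) ^ 2 * (x ⬝ᵥ C *ᵥ x)
        + c * (μ ^ 2 * (x ⬝ᵥ C *ᵥ x) + (S * C).trace * μ) := by
  have hB : (1 - η • S) *ᵥ x = (1 - η * μ) • x := by
    rw [sub_mulVec, one_mulVec, smul_mulVec, hx, smul_smul, sub_smul, one_smul]
  rw [add_mulVec, smul_mulVec, add_mulVec, smul_mulVec, hx, dotProduct_add, dotProduct_smul,
    dotProduct_add, dotProduct_smul, dotProduct_smul, hxx,
    dotProduct_mul_mul_mulVec_of_isSymm (isSymm_one.sub (hS.smul η)) hB,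
    dotProduct_mul_mul_mulVec_of_isSymm hS hx]
  simp only [smul_eq_mul, mul_one]

end Matrix

theorem Amat_mulVec_apply (N : ℕ) (lam : Fin N → ℝ) (η m : ℝ) (w : Fin N → ℝ) (k : Fin N) :
    (Amat N lam η m *ᵥ w) k
      = (1 - η * lam k) ^ 2 * w k + η ^ 2 / m * (lam k ^ 2 * w k + (lam ⬝ᵥ w) * lam k) := by
  have hdiag : (1 - η • diagonal lam : Matrix (Fin N) (Fin N) ℝ) ^ 2
      = diagonal fun j => (1 - η * lam j) ^ 2 := by
    rw [← diagonal_one, ← diagonal_smul, diagonal_sub, sq, diagonal_mul_diagonal]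
    simp only [Pi.smul_apply, smul_eq_mul, sq]
  simp only [Amat, add_mulVec, smul_mulVec, hdiag, mulVec_diagonal, vecMulVec_mulVec,
    op_smul_eq_smul, Pi.add_apply, Pi.smul_apply, smul_eq_mul]
  ring

theorem sgd_test_loss_gaussian_general
    (N : ℕ) (u : Fin N → (Fin N → ℝ))
    (hu : ∀ k l, u k ⬝ᵥ u l = if k = l then (1 : ℝ) else 0)
    (lam : Fin N → ℝ)
    (S : Matrix (Fin N) (Fin N) ℝ)
    (hS : S = ∑ k, lam k • vecMulVec (u k) (u k))
    (η m : ℝ)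
    (Δ : Fin N → ℝ) (C : ℕ → Matrix (Fin N) (Fin N) ℝ)
    (hC0 : C 0 = vecMulVec Δ Δ)
    (hrec : ∀ t, C (t + 1) = (1 - η • S) * C t * (1 - η • S)
        + (η ^ 2 / m) • (S * C t * S + (S * C t).trace • S)) :
    ∀ t, (S * C t).trace
      = lam ⬝ᵥ ((Amat N lam η m) ^ t).mulVec (fun k => (u k ⬝ᵥ Δ) ^ 2) := by
  set d : ℕ → Fin N → ℝ := fun t k => u k ⬝ᵥ C t *ᵥ u k
  have hS_symm : S.IsSymm := hS ▸ isSymm_sum_smul_vecMulVec_self lam u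
  have hS_eigen (k : Fin N) : S *ᵥ u k = lam k • u k :=
    hS ▸ sum_smul_vecMulVec_self_mulVec_of_orthonormal hu lam k
  have htrace (t : ℕ) : (S * C t).trace = lam ⬝ᵥ d t := by
    rw [hS, trace_sum_smul_vecMulVec_self_mul]
    rfl
  have hd0 : d 0 = fun k => (u k ⬝ᵥ Δ) ^ 2 := by
    ext k
    simp only [d, hC0, vecMulVec_mulVec, op_smul_eq_smul, dotProduct_smul, smul_eq_mul,
      dotProduct_comm Δ, sq]
  have hstep (t : ℕ) : d (t + 1) = Amat N lam η m *ᵥ d t := by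
    ext k
    rw [Amat_mulVec_apply, ← htrace]
    simp only [d, hrec]
    exact dotProduct_sgdCovUpdate_mulVec hS_symm (hS_eigen k) (by simpa using hu k k) η _ (C t)
  intro t
  suffices d t = Amat N lam η m ^ t *ᵥ d 0 by rw [htrace, this, hd0]
  induction t with
  | zero => rw [pow_zero, one_mulVec]
  | succ t ih => rw [hstep, ih, mulVec_mulVec, pow_succ']

/-- Let `S = ∑ₖ λₖ uₖ uₖᵀ` with `u₁,…,u_N` orthonormal and `λₖ ≥ 0`;
let `η > 0`, `m > 0`.  If `C_{t+1} = (I − ηS) C_t (I − ηS) + (η²/m)[S C_t S + Tr(S C_t) S]`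
with `C₀ = Δ Δᵀ` and `vₖ = uₖᵀ Δ`, then `Tr(S C_t) = λᵀ A(λ,η,m)^t v²` for all `t`. -/
theorem sgd_test_loss_gaussian
    (N : ℕ) (hN : 1 ≤ N) (u : Fin N → (Fin N → ℝ))
    (hu : ∀ k l, u k ⬝ᵥ u l = if k = l then (1 : ℝ) else 0)
    (lam : Fin N → ℝ) (hlam : ∀ k, 0 ≤ lam k)
    (S : Matrix (Fin N) (Fin N) ℝ)
    (hS : S = ∑ k, lam k • vecMulVec (u k) (u k))
    (η m : ℝ) (hη : 0 < η) (hm : 0 < m)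
    (Δ : Fin N → ℝ) (C : ℕ → Matrix (Fin N) (Fin N) ℝ)
    (hC0 : C 0 = vecMulVec Δ Δ)
    (hrec : ∀ t, C (t + 1) = (1 - η • S) * C t * (1 - η • S)
        + (η ^ 2 / m) • (S * C t * S + (S * C t).trace • S)) :
    ∀ t, (S * C t).trace
      = lam ⬝ᵥ ((Amat N lam η m) ^ t).mulVec (fun k => (u k ⬝ᵥ Δ) ^ 2) :=
  sgd_test_loss_gaussian_general N u hu lam S hS η m Δ C hC0 hrec
end

section
/- Let N ≥ 1, let λ ∈ ℝ^N have all entries in [0,1], let η ∈ [0,1], and let m > 0. Then for every v ∈ ℝ^N and every t ∈ ℕ, λᵀ A(λ,η,m)^t v² ≥ ((1 − η)² + (η²/m) ‖λ‖²)^t · (λᵀ v²), where ‖λ‖² = Σ_k λ_k². -/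
open Matrix

section ConeIteration

variable {n : Type*} [Fintype n] [DecidableEq n]

theorem pow_mul_dotProduct_le_dotProduct_pow_mulVec (A : Matrix n n ℝ) (u : n → ℝ) {c : ℝ}
    (hc : 0 ≤ c) (hA : ∀ w, 0 ≤ w → 0 ≤ A *ᵥ w)
    (hstep : ∀ w, 0 ≤ w → c * (u ⬝ᵥ w) ≤ u ⬝ᵥ A *ᵥ w) (t : ℕ) {w : n → ℝ} (hw : 0 ≤ w) :
    c ^ t * (u ⬝ᵥ w) ≤ u ⬝ᵥ (A ^ t) *ᵥ w := by
  induction t generalizing w with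
  | zero => simp
  | succ t ih =>
    rw [pow_succ A, ← mulVec_mulVec]
    calc c ^ (t + 1) * (u ⬝ᵥ w) = c ^ t * (c * (u ⬝ᵥ w)) := by ring
      _ ≤ c ^ t * (u ⬝ᵥ A *ᵥ w) := mul_le_mul_of_nonneg_left (hstep w hw) (pow_nonneg hc t)
      _ ≤ u ⬝ᵥ (A ^ t) *ᵥ (A *ᵥ w) := ih (hA w hw)

end ConeIteration

section Amat

variable {N : ℕ} {lam : Fin N → ℝ} {η m : ℝ}

theorem Amat_mulVec (w : Fin N → ℝ) :
    Amat N lam η m *ᵥ w = (fun i => ((1 - η * lam i) ^ 2 + η ^ 2 / m * lam i ^ 2) * w i)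
      + (η ^ 2 / m * (lam ⬝ᵥ w)) • lam := by
  have hdiag : (1 : Matrix (Fin N) (Fin N) ℝ) - η • diagonal lam
      = diagonal fun k => 1 - η * lam k := by
    rw [← diagonal_one, ← diagonal_smul, diagonal_sub]
    rfl
  ext i
  simp only [Amat, hdiag, diagonal_pow, add_mulVec, smul_mulVec, mulVec_diagonal,
    vecMulVec_mulVec, Pi.add_apply, Pi.smul_apply, Pi.pow_apply, op_smul_eq_mul, smul_eq_mul]
  ring

theorem Amat_mulVec_nonneg (hlam : 0 ≤ lam) (hm : 0 ≤ m) {w : Fin N → ℝ} (hw : 0 ≤ w) :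
    0 ≤ Amat N lam η m *ᵥ w := by
  have hc : 0 ≤ η ^ 2 / m := by positivity
  rw [Amat_mulVec]
  refine add_nonneg (fun i => mul_nonneg (by positivity) (hw i)) ?_
  exact smul_nonneg (mul_nonneg hc (dotProduct_nonneg_of_nonneg hlam hw)) hlam

theorem mul_dotProduct_le_dotProduct_Amat_mulVec (hlam : ∀ k, lam k ∈ Set.Icc (0 : ℝ) 1)
    (hη : η ∈ Set.Icc (0 : ℝ) 1) (hm : 0 ≤ m) {w : Fin N → ℝ} (hw : 0 ≤ w) :
    ((1 - η) ^ 2 + η ^ 2 / m * ∑ k, lam k ^ 2) * (lam ⬝ᵥ w)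
      ≤ lam ⬝ᵥ Amat N lam η m *ᵥ w := by
  have hdiag : (1 - η) ^ 2 * (lam ⬝ᵥ w)
      ≤ lam ⬝ᵥ fun i => ((1 - η * lam i) ^ 2 + η ^ 2 / m * lam i ^ 2) * w i := by
    rw [dotProduct, dotProduct, Finset.mul_sum]
    refine Finset.sum_le_sum fun i _ => ?_
    obtain ⟨hlam₀, hlam₁⟩ := hlam i
    have hshrink : (1 - η) ^ 2 ≤ (1 - η * lam i) ^ 2 :=
      pow_le_pow_left₀ (by linarith [hη.2]) (by nlinarith [hη.1]) 2
    calc (1 - η) ^ 2 * (lam i * w i) = lam i * w i * (1 - η) ^ 2 := by ring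
      _ ≤ lam i * w i * ((1 - η * lam i) ^ 2 + η ^ 2 / m * lam i ^ 2) :=
        mul_le_mul_of_nonneg_left (le_add_of_le_of_nonneg hshrink (by positivity))
          (mul_nonneg hlam₀ (hw i))
      _ = lam i * (((1 - η * lam i) ^ 2 + η ^ 2 / m * lam i ^ 2) * w i) := by ring
  have hnorm : ∑ k, lam k ^ 2 = lam ⬝ᵥ lam := by simp only [dotProduct, sq]
  rw [Amat_mulVec, dotProduct_add, dotProduct_smul, smul_eq_mul, hnorm]
  linear_combination hdiag

end Amat

theorem sgd_loss_lower_bound_general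
    (N : ℕ) (lam : Fin N → ℝ) (hlam : ∀ k, lam k ∈ Set.Icc (0 : ℝ) 1)
    (η : ℝ) (hη : η ∈ Set.Icc (0 : ℝ) 1) (m : ℝ) (hm : 0 < m)
    (v : Fin N → ℝ) (t : ℕ) :
    ((1 - η) ^ 2 + (η ^ 2 / m) * ∑ k, (lam k) ^ 2) ^ t * (lam ⬝ᵥ fun k => (v k) ^ 2)
      ≤ lam ⬝ᵥ ((Amat N lam η m) ^ t).mulVec (fun k => (v k) ^ 2) := by
  have hlam₀ : 0 ≤ lam := fun k => (hlam k).1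
  exact pow_mul_dotProduct_le_dotProduct_pow_mulVec _ _ (by positivity)
    (fun w hw => Amat_mulVec_nonneg hlam₀ hm.le hw)
    (fun w hw => mul_dotProduct_le_dotProduct_Amat_mulVec hlam hη hm.le hw) t
    (fun k => sq_nonneg (v k))

/-- If all entries of `λ` lie in `[0,1]`, `η ∈ [0,1]` and `m > 0`, then for
every `v` and every `t`,
`λᵀ A(λ,η,m)^t v² ≥ ((1 − η)² + (η²/m) ‖λ‖²)^t · (λᵀ v²)`, where `‖λ‖² = ∑ₖ λₖ²`. -/
theorem sgd_loss_lower_bound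
    (N : ℕ) (hN : 1 ≤ N) (lam : Fin N → ℝ) (hlam : ∀ k, lam k ∈ Set.Icc (0 : ℝ) 1)
    (η : ℝ) (hη : η ∈ Set.Icc (0 : ℝ) 1) (m : ℝ) (hm : 0 < m)
    (v : Fin N → ℝ) (t : ℕ) :
    ((1 - η) ^ 2 + (η ^ 2 / m) * ∑ k, (lam k) ^ 2) ^ t * (lam ⬝ᵥ fun k => (v k) ^ 2)
      ≤ lam ⬝ᵥ ((Amat N lam η m) ^ t).mulVec (fun k => (v k) ^ 2) :=
  sgd_loss_lower_bound_general N lam hlam η hη m hm v t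
end

section
/- Let N ≥ 1, let λ ∈ ℝ^N have all entries in [0,1], let η ∈ (0,1], let v ∈ ℝ^N with λᵀ v² > 0, and let m > 0 satisfy m < η ‖λ‖² / (2 − η), where ‖λ‖² = Σ_k λ_k². Then λᵀ A(λ,η,m)^t v² → ∞ as t → ∞; that is, the expected SGD test loss diverges. -/
open Matrix Filter

/-!
`A` is a diagonal matrix with entries `(1 - ηλᵢ)² + (η²/m)λᵢ² ≥ (1 - η)²` plus the rank-one term
`(η²/m) λλᵀ`, so it has nonnegative entries and, on the nonnegative cone,
`λᵀ A u ≥ ρ λᵀ u` with `ρ = (1 - η)² + (η²/m)‖λ‖²`. Hence `λᵀ Aᵗ v² ≥ ρᵗ λᵀ v²`, and the bound on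
`m` is exactly the condition `ρ > 1`, since `1 - (1 - η)² = η(2 - η)`.
-/

namespace Matrix

variable {n : Type*} [Fintype n] [DecidableEq n]

theorem pow_mul_dotProduct_le_dotProduct_pow_mulVec {M : Matrix n n ℝ} {ℓ : n → ℝ} {ρ : ℝ}
    (hρ : 0 ≤ ρ) (hM : ∀ u, 0 ≤ u → 0 ≤ M *ᵥ u)
    (hgrowth : ∀ u, 0 ≤ u → ρ * (ℓ ⬝ᵥ u) ≤ ℓ ⬝ᵥ (M *ᵥ u)) {u : n → ℝ} (hu : 0 ≤ u) (t : ℕ) :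
    ρ ^ t * (ℓ ⬝ᵥ u) ≤ ℓ ⬝ᵥ (M ^ t *ᵥ u) := by
  induction t generalizing u with
  | zero => simp
  | succ t ih =>
    calc ρ ^ (t + 1) * (ℓ ⬝ᵥ u) = ρ ^ t * (ρ * (ℓ ⬝ᵥ u)) := by ring
      _ ≤ ρ ^ t * (ℓ ⬝ᵥ (M *ᵥ u)) := by gcongr; exact hgrowth u hu
      _ ≤ ℓ ⬝ᵥ (M ^ t *ᵥ (M *ᵥ u)) := ih (hM u hu)
      _ = ℓ ⬝ᵥ (M ^ (t + 1) *ᵥ u) := by rw [mulVec_mulVec, pow_succ]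

theorem tendsto_dotProduct_pow_mulVec_atTop {M : Matrix n n ℝ} {ℓ : n → ℝ} {ρ : ℝ}
    (hρ : 1 < ρ) (hM : ∀ u, 0 ≤ u → 0 ≤ M *ᵥ u)
    (hgrowth : ∀ u, 0 ≤ u → ρ * (ℓ ⬝ᵥ u) ≤ ℓ ⬝ᵥ (M *ᵥ u)) {u : n → ℝ} (hu : 0 ≤ u)
    (hℓu : 0 < ℓ ⬝ᵥ u) :
    Tendsto (fun t : ℕ => ℓ ⬝ᵥ (M ^ t *ᵥ u)) atTop atTop :=
  tendsto_atTop_mono (pow_mul_dotProduct_le_dotProduct_pow_mulVec (by linarith) hM hgrowth hu)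
    ((tendsto_pow_atTop_atTop_of_one_lt hρ).atTop_mul_const hℓu)

theorem diagonal_add_smul_vecMulVec_mulVec (d ℓ u : n → ℝ) (c : ℝ) :
    (diagonal d + c • vecMulVec ℓ ℓ) *ᵥ u = d * u + (c * (ℓ ⬝ᵥ u)) • ℓ := by
  ext i
  simp [add_mulVec, smul_mulVec, mulVec_diagonal, vecMulVec_mulVec, mul_comm, mul_left_comm]

theorem diagonal_add_smul_vecMulVec_mulVec_nonneg {d ℓ u : n → ℝ} {c : ℝ} (hd : 0 ≤ d)
    (hc : 0 ≤ c) (hℓ : 0 ≤ ℓ) (hu : 0 ≤ u) :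
    0 ≤ (diagonal d + c • vecMulVec ℓ ℓ) *ᵥ u := by
  rw [diagonal_add_smul_vecMulVec_mulVec]
  exact add_nonneg (mul_nonneg hd hu)
    (smul_nonneg (mul_nonneg hc (dotProduct_nonneg_of_nonneg hℓ hu)) hℓ)

theorem mul_dotProduct_le_dotProduct_diagonal_add_smul_vecMulVec_mulVec {d ℓ u : n → ℝ}
    {a c : ℝ} (hda : ∀ i, a * ℓ i ≤ ℓ i * d i) (hu : 0 ≤ u) :
    (a + c * (ℓ ⬝ᵥ ℓ)) * (ℓ ⬝ᵥ u) ≤ ℓ ⬝ᵥ ((diagonal d + c • vecMulVec ℓ ℓ) *ᵥ u) := by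
  have hdiag : a * (ℓ ⬝ᵥ u) ≤ ℓ ⬝ᵥ (d * u) := by
    simp only [dotProduct, Finset.mul_sum, Pi.mul_apply]
    refine Finset.sum_le_sum fun i _ => ?_
    calc a * (ℓ i * u i) = (a * ℓ i) * u i := by ring
      _ ≤ (ℓ i * d i) * u i := mul_le_mul_of_nonneg_right (hda i) (hu i)
      _ = ℓ i * (d i * u i) := by ring
  rw [diagonal_add_smul_vecMulVec_mulVec, dotProduct_add, dotProduct_smul, smul_eq_mul]
  linarith [mul_comm (ℓ ⬝ᵥ ℓ) (ℓ ⬝ᵥ u)]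

end Matrix

theorem Amat_eq_diagonal_add_smul_vecMulVec (N : ℕ) (lam : Fin N → ℝ) (η m : ℝ) :
    Amat N lam η m = diagonal (fun i => (1 - η * lam i) ^ 2 + η ^ 2 / m * lam i ^ 2)
      + (η ^ 2 / m) • vecMulVec lam lam := by
  have hlin : (1 - η • diagonal lam : Matrix (Fin N) (Fin N) ℝ)
      = diagonal fun i => 1 - η * lam i := by
    rw [← diagonal_one, ← diagonal_smul, ← diagonal_sub]
    rfl
  rw [Amat, hlin, diagonal_pow, ← diagonal_smul, diagonal_add]
  rfl

theorem one_lt_sq_one_sub_add {η m S : ℝ} (hη : 0 < η) (hη2 : η < 2) (hm : 0 < m)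
    (hm' : m < η * S / (2 - η)) :
    1 < (1 - η) ^ 2 + η ^ 2 / m * S := by
  have hmS : m * (2 - η) < η * S := (lt_div_iff₀ (by linarith)).mp hm'
  have : η * (2 - η) < η ^ 2 / m * S := by
    rw [div_mul_eq_mul_div, lt_div_iff₀ hm]
    nlinarith
  nlinarith

theorem sgd_instability_general
    (N : ℕ) (lam : Fin N → ℝ) (hlam : ∀ k, lam k ∈ Set.Icc (0 : ℝ) 1)
    (η : ℝ) (hη : η ∈ Set.Ioc (0 : ℝ) 1)
    (v : Fin N → ℝ) (hv : 0 < lam ⬝ᵥ fun k => (v k) ^ 2)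
    (m : ℝ) (hm : 0 < m) (hm' : m < η * (∑ k, (lam k) ^ 2) / (2 - η)) :
    Tendsto (fun t : ℕ => lam ⬝ᵥ ((Amat N lam η m) ^ t).mulVec (fun k => (v k) ^ 2))
      atTop atTop := by
  obtain ⟨hη0, hη1⟩ := hη
  have hc : 0 ≤ η ^ 2 / m := by positivity
  have hnorm : lam ⬝ᵥ lam = ∑ k, lam k ^ 2 := by simp only [dotProduct, sq]
  have hdiag : ∀ i, (1 - η) ^ 2 * lam i ≤ lam i * ((1 - η * lam i) ^ 2 + η ^ 2 / m * lam i ^ 2) :=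
    fun i => by
      obtain ⟨h0, h1⟩ := hlam i
      have : (1 - η) ^ 2 ≤ (1 - η * lam i) ^ 2 := by gcongr; nlinarith
      nlinarith [mul_nonneg hc (pow_nonneg h0 3)]
  rw [Amat_eq_diagonal_add_smul_vecMulVec]
  refine tendsto_dotProduct_pow_mulVec_atTop (ρ := (1 - η) ^ 2 + η ^ 2 / m * (lam ⬝ᵥ lam))
    ?_ (fun u hu => diagonal_add_smul_vecMulVec_mulVec_nonneg (fun i => by positivity) hc
      (fun i => (hlam i).1) hu)
    (fun u hu => mul_dotProduct_le_dotProduct_diagonal_add_smul_vecMulVec_mulVec hdiag hu)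
    (fun k => sq_nonneg (v k)) hv
  rw [hnorm]
  exact one_lt_sq_one_sub_add hη0 (by linarith) hm hm'

/-- If all entries of `λ` lie in `[0,1]`, `η ∈ (0,1]`, `λᵀ v² > 0`, and the
batch size satisfies `0 < m < η ‖λ‖² / (2 − η)` with `‖λ‖² = ∑ₖ λₖ²`, then the expected SGD
test loss `λᵀ A(λ,η,m)^t v²` diverges to `∞` as `t → ∞`. -/
theorem sgd_instability
    (N : ℕ) (hN : 1 ≤ N) (lam : Fin N → ℝ) (hlam : ∀ k, lam k ∈ Set.Icc (0 : ℝ) 1)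
    (η : ℝ) (hη : η ∈ Set.Ioc (0 : ℝ) 1)
    (v : Fin N → ℝ) (hv : 0 < lam ⬝ᵥ fun k => (v k) ^ 2)
    (m : ℝ) (hm : 0 < m) (hm' : m < η * (∑ k, (lam k) ^ 2) / (2 - η)) :
    Tendsto (fun t : ℕ => lam ⬝ᵥ ((Amat N lam η m) ^ t).mulVec (fun k => (v k) ^ 2))
      atTop atTop :=
  sgd_instability_general N lam hlam η hη v hv m hm hm'
end

section
/- Let N ≥ 1, let λ ∈ ℝ^N have nonnegative entries, let η ≥ 0, and let 0 < m₁ ≤ m₂ be real batch sizes. Then for every v ∈ ℝ^N and every t ∈ ℕ, λᵀ A(λ,η,m₂)^t v² ≤ λᵀ A(λ,η,m₁)^t v². That is, at any fixed number of steps t, increasing the batch size can only decrease the expected test loss. -/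
/-!
All entries of `A(λ,η,m)` are nonnegative and, for `m > 0`, antitone in `m`: `m` enters only
through the factor `η²/m` in front of the entrywise nonnegative matrices `diag(λ²)` and `λλᵀ`.
Entrywise order between nonnegative matrices is preserved by powers and by application to
nonnegative vectors, and pairing with `λ ≥ 0` preserves it again.
-/

open Matrix

namespace Matrix

variable {m n R : Type*} [Fintype n] [Semiring R] [PartialOrder R] [IsOrderedRing R]

theorem mulVec_le_mulVec_of_apply_le {A B : Matrix m n R} (hAB : ∀ i j, A i j ≤ B i j)
    {x : n → R} (hx : 0 ≤ x) : A *ᵥ x ≤ B *ᵥ x := fun i =>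
  dotProduct_le_dotProduct_of_nonneg_right (hAB i) hx

theorem pow_apply_le_pow_apply [DecidableEq n] {A B : Matrix n n R} (hA : ∀ i j, 0 ≤ A i j)
    (hAB : ∀ i j, A i j ≤ B i j) (t : ℕ) (i j : n) : (A ^ t) i j ≤ (B ^ t) i j := by
  induction t generalizing j with
  | zero => rfl
  | succ t ih =>
    rw [pow_succ, pow_succ, mul_apply, mul_apply]
    exact Finset.sum_le_sum fun k _ =>
      mul_le_mul (ih k) (hAB k j) (hA k j) ((pow_apply_nonneg hA t i k).trans (ih k))

end Matrix

section Amat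

variable {N : ℕ} {lam : Fin N → ℝ} {η m : ℝ}

theorem Amat_apply (i j : Fin N) :
    Amat N lam η m i j =
      diagonal (fun k => (1 - η * lam k) ^ 2 + η ^ 2 / m * lam k ^ 2) i j
        + η ^ 2 / m * (lam i * lam j) := by
  have hsq : ((1 : Matrix (Fin N) (Fin N) ℝ) - η • diagonal lam) ^ 2
      = diagonal (fun k => (1 - η * lam k) ^ 2) := by
    rw [← diagonal_one, ← diagonal_smul, diagonal_sub, sq, diagonal_mul_diagonal]
    simp only [Pi.smul_apply, smul_eq_mul, sq]
  rw [Amat, hsq, ← diagonal_smul, diagonal_add]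
  rfl

theorem Amat_apply_nonneg (hlam : ∀ k, 0 ≤ lam k) (hm : 0 < m) (i j : Fin N) :
    0 ≤ Amat N lam η m i j := by
  have hc : 0 ≤ η ^ 2 / m := by positivity
  rw [Amat_apply, diagonal_apply]
  have := mul_nonneg hc (mul_nonneg (hlam i) (hlam j))
  split_ifs <;> positivity

theorem Amat_apply_antitone (hlam : ∀ k, 0 ≤ lam k) {m₁ m₂ : ℝ} (hm₁ : 0 < m₁) (hm : m₁ ≤ m₂)
    (i j : Fin N) : Amat N lam η m₂ i j ≤ Amat N lam η m₁ i j := by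
  have hc : η ^ 2 / m₂ ≤ η ^ 2 / m₁ := div_le_div_of_nonneg_left (sq_nonneg η) hm₁ hm
  rw [Amat_apply, Amat_apply, diagonal_apply, diagonal_apply]
  have := mul_le_mul_of_nonneg_right hc (mul_nonneg (hlam i) (hlam j))
  split_ifs
  · nlinarith [sq_nonneg (lam i)]
  · linarith

end Amat

theorem batch_size_monotonicity_general
    (N : ℕ) (lam : Fin N → ℝ) (hlam : ∀ k, 0 ≤ lam k)
    (η : ℝ)
    (m₁ m₂ : ℝ) (hm₁ : 0 < m₁) (hm : m₁ ≤ m₂)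
    (v : Fin N → ℝ) (t : ℕ) :
    lam ⬝ᵥ ((Amat N lam η m₂) ^ t).mulVec (fun k => (v k) ^ 2)
      ≤ lam ⬝ᵥ ((Amat N lam η m₁) ^ t).mulVec (fun k => (v k) ^ 2) := by
  have hpow := pow_apply_le_pow_apply (Amat_apply_nonneg (η := η) hlam (hm₁.trans_le hm))
    (Amat_apply_antitone hlam hm₁ hm) t
  exact dotProduct_le_dotProduct_of_nonneg_left
    (mulVec_le_mulVec_of_apply_le hpow fun k => sq_nonneg (v k)) hlam

/-- For `λ` with nonnegative entries, `η ≥ 0`, and batch sizes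
`0 < m₁ ≤ m₂`, for every `v` and every `t`,
`λᵀ A(λ,η,m₂)^t v² ≤ λᵀ A(λ,η,m₁)^t v²`: increasing the batch size at fixed `t` can only
decrease the expected test loss. -/
theorem batch_size_monotonicity
    (N : ℕ) (hN : 1 ≤ N) (lam : Fin N → ℝ) (hlam : ∀ k, 0 ≤ lam k)
    (η : ℝ) (hη : 0 ≤ η)
    (m₁ m₂ : ℝ) (hm₁ : 0 < m₁) (hm : m₁ ≤ m₂)
    (v : Fin N → ℝ) (t : ℕ) :
    lam ⬝ᵥ ((Amat N lam η m₂) ^ t).mulVec (fun k => (v k) ^ 2)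
      ≤ lam ⬝ᵥ ((Amat N lam η m₁) ^ t).mulVec (fun k => (v k) ^ 2) :=
  batch_size_monotonicity_general N lam hlam η m₁ m₂ hm₁ hm v t
end

section
/- Let s > 0 and C > 0 be real numbers. Then the function m ↦ (s/(s + m))^{C/m} is strictly increasing on (0, ∞); equivalently, for 0 < m₁ < m₂, (s/(s + m₁))^{C/m₁} < (s/(s + m₂))^{C/m₂}. -/
/-!
Write `(s / (s + m)) ^ (C / m) = exp (-C · (log (s + m) - log s) / m)`. The quotient
`(log (s + m) - log s) / m` is the slope of the secant of `log` between `s` and `s + m`, which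
strictly decreases in `m` because `log` is strictly concave; since `C > 0` and `exp` is
increasing, the loss strictly increases with the batch size.
-/

open Real Set

lemma strictAntiOn_log_secant {a : ℝ} (ha : 0 < a) :
    StrictAntiOn (fun m : ℝ => (log (a + m) - log a) / m) (Ioi 0) := by
  intro m₁ hm₁ m₂ hm₂ hm
  rw [mem_Ioi] at hm₁ hm₂
  have h := strictConcaveOn_log_Ioi.secant_strict_mono (a := a) (x := a + m₁) (y := a + m₂)
    ha (by simp only [mem_Ioi]; linarith) (by simp only [mem_Ioi]; linarith)
    (by linarith) (by linarith) (by linarith)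
  simpa only [add_sub_cancel_left] using h

lemma div_add_rpow_eq_exp_neg_mul_log_secant {s m : ℝ} (C : ℝ) (hs : 0 < s) (hm : 0 < m) :
    (s / (s + m)) ^ (C / m) = exp (-(C * ((log (s + m) - log s) / m))) := by
  have hsm : 0 < s + m := by linarith
  rw [rpow_def_of_pos (div_pos hs hsm), log_div hs.ne' hsm.ne']
  ring_nf

/-- For real `s > 0` and compute budget `C > 0`, the function
`m ↦ (s/(s+m))^(C/m)` is strictly increasing on `(0, ∞)`; equivalently, for
`0 < m₁ < m₂`, `(s/(s+m₁))^(C/m₁) < (s/(s+m₂))^(C/m₂)` (real powers). -/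
theorem fixed_compute_prefers_small_batch (s C : ℝ) (hs : 0 < s) (hC : 0 < C) :
    StrictMonoOn (fun m : ℝ => (s / (s + m)) ^ (C / m)) (Set.Ioi (0 : ℝ))
    ∧ ∀ m₁ m₂ : ℝ, 0 < m₁ → m₁ < m₂ →
        (s / (s + m₁)) ^ (C / m₁) < (s / (s + m₂)) ^ (C / m₂) := by
  have hmono : StrictMonoOn (fun m : ℝ => (s / (s + m)) ^ (C / m)) (Ioi 0) := by
    intro m₁ hm₁ m₂ hm₂ hm
    simp only [div_add_rpow_eq_exp_neg_mul_log_secant C hs hm₁,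
      div_add_rpow_eq_exp_neg_mul_log_secant C hs hm₂, exp_lt_exp, neg_lt_neg_iff]
    exact mul_lt_mul_of_pos_left (strictAntiOn_log_secant hs hm₁ hm₂ hm) hC
  exact ⟨hmono, fun m₁ m₂ hm₁ hm => hmono hm₁ (mem_Ioi.2 (hm₁.trans hm)) hm⟩
end

section
/- Let N ≥ 1, let μ be a probability distribution of a random vector ψ on ℝ^N with finite fourth moments, and let Σ = E[ψψᵀ] = Σ_k λ_k u_k u_kᵀ with u₁,…,u_N an orthonormal basis. Define φ_k = u_kᵀψ and the fourth-moment tensor κ_{ijkl} = E[φ_i φ_j φ_k φ_l]. Let η > 0, m ≥ 1, and suppose the matrix sequence (C_t)_{t∈ℕ} satisfies C_{t+1} = C_t − η Σ C_t − η C_t Σ + η²((m−1)/m) Σ C_t Σ + (η²/m) E[ψψᵀ C_t ψψᵀ], with C₀ = ΔΔᵀ for some Δ ∈ ℝ^N, and set v_k = u_kᵀΔ. Writing d_{t,ij} = u_iᵀ C_t u_j, the N²-dimensional vector (d_{t,ij})_{ij} equals (G + (η²/m) K)^t applied to the vector (v_i v_j)_{ij}, where G is the diagonal N²×N² matrix with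 G_{(ij),(ij)} = 1 − η(λ_i + λ_j) + η²((m−1)/m) λ_i λ_j and K is the N²×N² matrix with K_{(ij),(kl)} = κ_{ijkl}; consequently Tr(Σ C_t) = Σ_k λ_k d_{t,kk}. -/
/-!
Conjugating by the orthonormal eigenbasis `u`, the coordinates `d_{ij} = uᵢᵀ C uⱼ` turn the
terms `S C`, `C S` and `S C S` of the recursion into multiplication by `λᵢ`, `λⱼ` and `λᵢ λⱼ`,
i.e. into the diagonal matrix `G`. For the fourth-moment term, expanding the quadratic form
`ψᵀ C ψ = ∑ₖₗ φₖ φₗ d_{kl}` in the same basis gives `uᵢᵀ E[ψψᵀ C ψψᵀ] uⱼ = ∑ₖₗ κᵢⱼₖₗ d_{kl}`,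
which is `K` applied to `d`. So `d` evolves by the linear map `G + (η²/m) K`, starting from
`d₀ = (vᵢ vⱼ)`. The trace formula is `tr(uₖ uₖᵀ C) = uₖᵀ C uₖ`.
-/

open MeasureTheory Matrix

section Algebra

variable {ι R : Type*} [Fintype ι] [CommRing R]

def basisCoeffs (u : ι → ι → R) : Matrix ι ι R →ₗ[R] ι × ι → R where
  toFun A p := u p.1 ⬝ᵥ A *ᵥ u p.2
  map_add' A B := by ext p; simp [add_mulVec, dotProduct_add]
  map_smul' c A := by ext p; simp [smul_mulVec, dotProduct_smul]

@[simp]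
theorem basisCoeffs_apply (u : ι → ι → R) (A : Matrix ι ι R) (p : ι × ι) :
    basisCoeffs u A p = u p.1 ⬝ᵥ A *ᵥ u p.2 :=
  rfl

theorem basisCoeffs_vecMulVec (u : ι → ι → R) (a b : ι → R) (p : ι × ι) :
    basisCoeffs u (vecMulVec a b) p = (u p.1 ⬝ᵥ a) * (u p.2 ⬝ᵥ b) := by
  simp [vecMulVec_mulVec, dotProduct_comm b, mul_comm]

theorem basisCoeffs_mul_left {u : ι → ι → R} {S : Matrix ι ι R} {c : ι → R} (hS : S.IsSymm)
    (hSu : ∀ j, S *ᵥ u j = c j • u j) (A : Matrix ι ι R) (p : ι × ι) :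
    basisCoeffs u (S * A) p = c p.1 * basisCoeffs u A p := by
  rw [basisCoeffs_apply, ← mulVec_mulVec, dotProduct_mulVec, ← hS.eq, vecMul_transpose, hSu,
    smul_dotProduct, smul_eq_mul, basisCoeffs_apply]

theorem basisCoeffs_mul_right {u : ι → ι → R} {S : Matrix ι ι R} {c : ι → R}
    (hSu : ∀ j, S *ᵥ u j = c j • u j) (A : Matrix ι ι R) (p : ι × ι) :
    basisCoeffs u (A * S) p = c p.2 * basisCoeffs u A p := by
  rw [basisCoeffs_apply, ← mulVec_mulVec, hSu, mulVec_smul, dotProduct_smul, smul_eq_mul,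
    basisCoeffs_apply]

theorem trace_sum_smul_vecMulVec_mul {κ : Type*} [Fintype κ] (u : κ → ι → R) (c : κ → R)
    (B : Matrix ι ι R) :
    ((∑ k, c k • vecMulVec (u k) (u k)) * B).trace = ∑ k, c k * (u k ⬝ᵥ B *ᵥ u k) := by
  simp [Finset.sum_mul, trace_sum, smul_mul, trace_smul, vecMulVec_mul, dotProduct_comm,
    dotProduct_mulVec]

variable [DecidableEq ι]

theorem transpose_mul_self_of_orthonormal {u : ι → ι → R}
    (hu : ∀ k l, u k ⬝ᵥ u l = if k = l then 1 else 0) : (of u)ᵀ * of u = 1 :=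
  mul_eq_one_comm.mp <| ext fun k l => by simpa [mul_apply', one_apply, dotProduct] using hu k l

theorem sum_smul_vecMulVec_mulVec_of_orthonormal {u : ι → ι → R}
    (hu : ∀ k l, u k ⬝ᵥ u l = if k = l then 1 else 0) (c : ι → R) (j : ι) :
    (∑ k, c k • vecMulVec (u k) (u k)) *ᵥ u j = c j • u j := by
  simp [sum_mulVec, smul_mulVec, vecMulVec_mulVec, hu]

theorem sum_dotProduct_smul_eq_self {u : ι → ι → R} (hU : (of u)ᵀ * of u = 1) (x : ι → R) :
    ∑ k, (u k ⬝ᵥ x) • u k = x :=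
  calc ∑ k, (u k ⬝ᵥ x) • u k = (of u *ᵥ x) ᵥ* of u := (vecMul_eq_sum _ _).symm
    _ = x := by rw [← mulVec_transpose, mulVec_mulVec, hU, one_mulVec]

theorem dotProduct_mulVec_eq_sum_basisCoeffs {u : ι → ι → R} (hU : (of u)ᵀ * of u = 1)
    (A : Matrix ι ι R) (x y : ι → R) :
    x ⬝ᵥ A *ᵥ y = ∑ q, (u q.1 ⬝ᵥ x) * (u q.2 ⬝ᵥ y) * basisCoeffs u A q := by
  conv_lhs => rw [← sum_dotProduct_smul_eq_self hU x, ← sum_dotProduct_smul_eq_self hU y]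
  simp only [sum_dotProduct, mulVec_sum, dotProduct_sum, mulVec_smul, smul_dotProduct,
    dotProduct_smul, smul_eq_mul, Fintype.sum_prod_type, Finset.mul_sum, basisCoeffs_apply]
  rw [Finset.sum_comm]
  exact Finset.sum_congr rfl fun k _ => Finset.sum_congr rfl fun l _ => by ring

end Algebra

section Moments

variable {ι : Type*} [Fintype ι]

theorem dotProduct_mulVec_of_integral {Ω : Type*} [MeasurableSpace Ω] {μ : Measure Ω}
    {f : ι → ι → Ω → ℝ} (hf : ∀ a b, Integrable (f a b) μ) (v w : ι → ℝ) :
    v ⬝ᵥ (of fun a b => ∫ x, f a b x ∂μ) *ᵥ w = ∫ x, v ⬝ᵥ (of fun a b => f a b x) *ᵥ w ∂μ := by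
  simp only [dotProduct, mulVec, of_apply, Finset.mul_sum]
  rw [integral_finsetSum _ fun a _ => integrable_finsetSum _ fun b _ =>
    ((hf a b).mul_const _).const_mul _]
  refine Finset.sum_congr rfl fun a _ => ?_
  rw [integral_finsetSum _ fun b _ => ((hf a b).mul_const _).const_mul _]
  simp only [integral_const_mul, integral_mul_const]

variable {μ : Measure (ι → ℝ)}

theorem integrable_dotProduct_mul_four
    (h4 : ∀ i j k l, Integrable (fun ψ => ψ i * ψ j * ψ k * ψ l) μ) (a b c d : ι → ℝ) :
    Integrable (fun ψ => (a ⬝ᵥ ψ) * (b ⬝ᵥ ψ) * (c ⬝ᵥ ψ) * (d ⬝ᵥ ψ)) μ := by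
  simp only [dotProduct, Finset.sum_mul, Finset.mul_sum]
  refine integrable_finsetSum _ fun i _ => integrable_finsetSum _ fun j _ =>
    integrable_finsetSum _ fun k _ => integrable_finsetSum _ fun l _ => ?_
  refine ((h4 l k j i).const_mul (a l * b k * c j * d i)).congr (ae_of_all _ fun ψ => ?_)
  simp only
  ring

theorem integrable_mul_dotProduct_mulVec_mul
    (h4 : ∀ i j k l, Integrable (fun ψ => ψ i * ψ j * ψ k * ψ l) μ) (A : Matrix ι ι ℝ)
    (a b : ι) :
    Integrable (fun ψ => ψ a * (ψ ⬝ᵥ A *ᵥ ψ) * ψ b) μ := by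
  simp only [dotProduct, mulVec, Finset.sum_mul, Finset.mul_sum]
  refine integrable_finsetSum _ fun c _ => integrable_finsetSum _ fun d _ => ?_
  refine ((h4 a c d b).const_mul (A c d)).congr (ae_of_all _ fun ψ => ?_)
  simp only
  ring

theorem basisCoeffs_fourthMoment [DecidableEq ι]
    (h4 : ∀ i j k l, Integrable (fun ψ => ψ i * ψ j * ψ k * ψ l) μ) {u : ι → ι → ℝ}
    (hU : (of u)ᵀ * of u = 1) (A : Matrix ι ι ℝ) (p : ι × ι) :
    basisCoeffs u (of fun a b => ∫ ψ, ψ a * (ψ ⬝ᵥ A *ᵥ ψ) * ψ b ∂μ) p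
      = ∑ q, (∫ ψ, (u p.1 ⬝ᵥ ψ) * (u p.2 ⬝ᵥ ψ) * (u q.1 ⬝ᵥ ψ) * (u q.2 ⬝ᵥ ψ) ∂μ)
          * basisCoeffs u A q := by
  have hexpand : ∀ ψ : ι → ℝ, basisCoeffs u (of fun a b => ψ a * (ψ ⬝ᵥ A *ᵥ ψ) * ψ b) p
      = ∑ q, basisCoeffs u A q * ((u p.1 ⬝ᵥ ψ) * (u p.2 ⬝ᵥ ψ) * (u q.1 ⬝ᵥ ψ) * (u q.2 ⬝ᵥ ψ)) := by
    intro ψ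
    have hrank_one : (of fun a b => ψ a * (ψ ⬝ᵥ A *ᵥ ψ) * ψ b) = (ψ ⬝ᵥ A *ᵥ ψ) • vecMulVec ψ ψ := by
      ext a b
      rw [Matrix.smul_apply, vecMulVec_apply, of_apply, smul_eq_mul]
      ring
    rw [hrank_one, map_smul, Pi.smul_apply, basisCoeffs_vecMulVec, smul_eq_mul,
      dotProduct_mulVec_eq_sum_basisCoeffs hU, Finset.sum_mul]
    exact Finset.sum_congr rfl fun q _ => by ring
  rw [basisCoeffs_apply, dotProduct_mulVec_of_integral (integrable_mul_dotProduct_mulVec_mul h4 A)]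
  simp only [← basisCoeffs_apply, hexpand]
  rw [integral_finsetSum _ fun q _ => (integrable_dotProduct_mul_four h4 _ _ _ _).const_mul _]
  exact Finset.sum_congr rfl fun q _ => by rw [integral_const_mul, mul_comm]

end Moments

theorem sgd_loss_arbitrary_features_general
    (N : ℕ) (μ : Measure (Fin N → ℝ))
    (h4 : ∀ i j k l : Fin N, Integrable (fun ψ => ψ i * ψ j * ψ k * ψ l) μ)
    (u : Fin N → (Fin N → ℝ))
    (hu : ∀ k l, u k ⬝ᵥ u l = if k = l then (1 : ℝ) else 0)
    (lam : Fin N → ℝ)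
    (S : Matrix (Fin N) (Fin N) ℝ)
    (hSdiag : S = ∑ k, lam k • vecMulVec (u k) (u k))
    (κ : Fin N → Fin N → Fin N → Fin N → ℝ)
    (hκ : ∀ i j k l, κ i j k l = ∫ ψ, (u i ⬝ᵥ ψ) * (u j ⬝ᵥ ψ) * (u k ⬝ᵥ ψ) * (u l ⬝ᵥ ψ) ∂μ)
    (η : ℝ) (m : ℕ)
    (Δ : Fin N → ℝ) (C : ℕ → Matrix (Fin N) (Fin N) ℝ)
    (hC0 : C 0 = vecMulVec Δ Δ)
    (hrec : ∀ t, C (t + 1) = C t - η • (S * C t) - η • (C t * S)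
        + (η ^ 2 * ((m : ℝ) - 1) / m) • (S * C t * S)
        + (η ^ 2 / m) • Matrix.of (fun i j => ∫ ψ, ψ i * (ψ ⬝ᵥ (C t).mulVec ψ) * ψ j ∂μ))
    (G K : Matrix (Fin N × Fin N) (Fin N × Fin N) ℝ)
    (hG : G = Matrix.diagonal (fun p : Fin N × Fin N =>
        1 - η * (lam p.1 + lam p.2) + η ^ 2 * ((m : ℝ) - 1) / m * (lam p.1 * lam p.2)))
    (hK : ∀ p q : Fin N × Fin N, K p q = κ p.1 p.2 q.1 q.2) :
    ∀ t : ℕ,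
      ((fun p : Fin N × Fin N => u p.1 ⬝ᵥ (C t).mulVec (u p.2))
          = ((G + (η ^ 2 / m) • K) ^ t).mulVec
              (fun q : Fin N × Fin N => (u q.1 ⬝ᵥ Δ) * (u q.2 ⬝ᵥ Δ)))
      ∧ (S * C t).trace = ∑ k, lam k * (u k ⬝ᵥ (C t).mulVec (u k)) := by
  have hU := transpose_mul_self_of_orthonormal hu
  have hSu : ∀ j, S *ᵥ u j = lam j • u j :=
    hSdiag ▸ sum_smul_vecMulVec_mulVec_of_orthonormal hu lam
  have hSsymm : S.IsSymm := by simp [hSdiag, IsSymm, transpose_sum]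
  have hstep : ∀ t, basisCoeffs u (C (t + 1)) = (G + (η ^ 2 / m) • K) *ᵥ basisCoeffs u (C t) := by
    intro t
    ext p
    simp only [hrec t, map_add, map_sub, map_smul, Pi.add_apply, Pi.sub_apply, Pi.smul_apply,
      smul_eq_mul, basisCoeffs_mul_right hSu, basisCoeffs_mul_left hSsymm hSu,
      basisCoeffs_fourthMoment h4 hU, add_mulVec, smul_mulVec, hG, mulVec_diagonal]
    simp only [mulVec, dotProduct, hK, hκ]
    ring
  intro t
  refine ⟨?_, hSdiag ▸ trace_sum_smul_vecMulVec_mul u lam (C t)⟩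
  change basisCoeffs u (C t) = _
  induction t with
  | zero => ext p; rw [pow_zero, one_mulVec, hC0, basisCoeffs_vecMulVec]
  | succ t ih => rw [hstep, ih, mulVec_mulVec, ← pow_succ']

/-- Let `μ` be a probability distribution on `ℝ^N` with finite fourth
moments and second-moment matrix `S = ∑ₖ λₖ uₖ uₖᵀ` (`u₁,…,u_N` orthonormal).  With
diagonalized features `φₖ = uₖᵀ ψ` and fourth-moment tensor `κᵢⱼₖₗ = E[φᵢ φⱼ φₖ φₗ]`,
suppose `C_{t+1} = C_t − η S C_t − η C_t S + η²((m−1)/m) S C_t S + (η²/m) E[ψψᵀ C_t ψψᵀ]`,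
`C₀ = Δ Δᵀ`, `vₖ = uₖᵀ Δ`.  Writing `d_{t,ij} = uᵢᵀ C_t uⱼ`, the `N²`-vector `(d_{t,ij})`
equals `(G + (η²/m) K)^t` applied to `(vᵢ vⱼ)`, with `G` diagonal with entries
`1 − η(λᵢ + λⱼ) + η²((m−1)/m) λᵢ λⱼ` and `K_{(ij),(kl)} = κᵢⱼₖₗ`; consequently
`Tr(S C_t) = ∑ₖ λₖ d_{t,kk}`. -/
theorem sgd_loss_arbitrary_features
    (N : ℕ) (hN : 1 ≤ N) (μ : Measure (Fin N → ℝ)) [IsProbabilityMeasure μ]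
    (h4 : ∀ i j k l : Fin N, Integrable (fun ψ => ψ i * ψ j * ψ k * ψ l) μ)
    (u : Fin N → (Fin N → ℝ))
    (hu : ∀ k l, u k ⬝ᵥ u l = if k = l then (1 : ℝ) else 0)
    (lam : Fin N → ℝ) (hlam : ∀ k, 0 ≤ lam k)
    (S : Matrix (Fin N) (Fin N) ℝ)
    (hS : ∀ i j, S i j = ∫ ψ, ψ i * ψ j ∂μ)
    (hSdiag : S = ∑ k, lam k • vecMulVec (u k) (u k))
    (κ : Fin N → Fin N → Fin N → Fin N → ℝ)
    (hκ : ∀ i j k l, κ i j k l = ∫ ψ, (u i ⬝ᵥ ψ) * (u j ⬝ᵥ ψ) * (u k ⬝ᵥ ψ) * (u l ⬝ᵥ ψ) ∂μ)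
    (η : ℝ) (hη : 0 < η) (m : ℕ) (hm : 1 ≤ m)
    (Δ : Fin N → ℝ) (C : ℕ → Matrix (Fin N) (Fin N) ℝ)
    (hC0 : C 0 = vecMulVec Δ Δ)
    (hrec : ∀ t, C (t + 1) = C t - η • (S * C t) - η • (C t * S)
        + (η ^ 2 * ((m : ℝ) - 1) / m) • (S * C t * S)
        + (η ^ 2 / m) • Matrix.of (fun i j => ∫ ψ, ψ i * (ψ ⬝ᵥ (C t).mulVec ψ) * ψ j ∂μ))
    (G K : Matrix (Fin N × Fin N) (Fin N × Fin N) ℝ)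
    (hG : G = Matrix.diagonal (fun p : Fin N × Fin N =>
        1 - η * (lam p.1 + lam p.2) + η ^ 2 * ((m : ℝ) - 1) / m * (lam p.1 * lam p.2)))
    (hK : ∀ p q : Fin N × Fin N, K p q = κ p.1 p.2 q.1 q.2) :
    ∀ t : ℕ,
      ((fun p : Fin N × Fin N => u p.1 ⬝ᵥ (C t).mulVec (u p.2))
          = ((G + (η ^ 2 / m) • K) ^ t).mulVec
              (fun q : Fin N × Fin N => (u q.1 ⬝ᵥ Δ) * (u q.2 ⬝ᵥ Δ)))
      ∧ (S * C t).trace = ∑ k, lam k * (u k ⬝ᵥ (C t).mulVec (u k)) :=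
  sgd_loss_arbitrary_features_general N μ h4 u hu lam S hSdiag κ hκ η m Δ C hC0 hrec G K hG hK
end

section
/- Let N ≥ 1, let μ be a probability distribution of a random vector ψ on ℝ^N with finite fourth moments, and let Σ = E[ψψᵀ] = Σ_k λ_k u_k u_kᵀ with u₁,…,u_N orthonormal and λ_k ≥ 0. Suppose there is α ≥ 1 such that for every positive-semidefinite symmetric G ∈ ℝ^{N×N}, E[ψψᵀ G ψψᵀ] ⪯ (α+1) Σ G Σ + α Σ · Tr(Σ G) in the Loewner order. Let η > 0, m ≥ 1, and suppose (C_t)_{t∈ℕ} satisfies C_{t+1} = C_t − η Σ C_t − η C_t Σ + η²((m−1)/m) Σ C_t Σ + (η²/m) E[ψψᵀ C_t ψψᵀ], with C₀ = ΔΔᵀ for some Δ ∈ ℝ^N, and set v_k = u_kᵀΔ. Then for all t ∈ ℕ, Tr(Σ C_t) ≤ λᵀ A_α^t v², where A_α = (I − η·diag(λ))² + (α η²/m) [ diag(λ²) + λλᵀ ] and v² is the entrywise square of v. -/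
/-!
Writing `C_{t+1} = (I - ηΣ) C_t (I - ηΣ) + (η²/m) (E[ψψᵀ C_t ψψᵀ] - Σ C_t Σ)` and using
`E[ψψᵀ G ψψᵀ] ⪰ Σ G Σ` for `G ⪰ 0` (Jensen's inequality `(E X)² ≤ E X²` after writing
`G = Bᵀ B`), every `C_t` is positive semidefinite, so the regularity hypothesis applies to it.
Testing the recursion against the eigenvectors `u_k` and bounding the fourth-moment term by that
hypothesis gives `w_{t+1} ≤ A_α w_t` entrywise for `w_t k = u_kᵀ C_t u_k`. As `A_α` has
nonnegative entries this iterates to `w_t ≤ A_α^t v²`, and `Tr(Σ C_t) = λᵀ w_t`.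
-/

open MeasureTheory Matrix

open ProbabilityTheory in
theorem sq_integral_le_integral_sq {Ω : Type*} [MeasurableSpace Ω] {μ : Measure Ω}
    [IsProbabilityMeasure μ] {X : Ω → ℝ} (hX : AEStronglyMeasurable X μ)
    (hX2 : Integrable (fun ω => X ω ^ 2) μ) :
    (∫ ω, X ω ∂μ) ^ 2 ≤ ∫ ω, X ω ^ 2 ∂μ := by
  have h := variance_eq_sub ((memLp_two_iff_integrable_sq hX).2 hX2)
  have := variance_nonneg X μ
  simp only [Pi.pow_apply] at h
  linarith

section Moments

variable {n : Type*}

def HasFiniteFourthMoments (μ : Measure (n → ℝ)) : Prop :=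
  ∀ i j k l : n, Integrable (fun ψ => ψ i * ψ j * ψ k * ψ l) μ

noncomputable def secondMomentMatrix (μ : Measure (n → ℝ)) : Matrix n n ℝ :=
  Matrix.of fun i j => ∫ ψ, ψ i * ψ j ∂μ

theorem secondMomentMatrix_transpose (μ : Measure (n → ℝ)) :
    (secondMomentMatrix μ)ᵀ = secondMomentMatrix μ := by
  ext i j
  simp only [transpose_apply, secondMomentMatrix, of_apply, mul_comm]

variable [Fintype n]

noncomputable def fourthMomentMatrix (μ : Measure (n → ℝ)) (G : Matrix n n ℝ) : Matrix n n ℝ :=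
  Matrix.of fun i j => ∫ ψ, ψ i * (ψ ⬝ᵥ G *ᵥ ψ) * ψ j ∂μ

variable {μ : Measure (n → ℝ)}

theorem dotProduct_integral_outer_mulVec {g : (n → ℝ) → ℝ}
    (hg : ∀ i j, Integrable (fun ψ => ψ i * g ψ * ψ j) μ) (x y : n → ℝ) :
    x ⬝ᵥ (Matrix.of (fun i j => ∫ ψ, ψ i * g ψ * ψ j ∂μ) *ᵥ y)
      = ∫ ψ, (x ⬝ᵥ ψ) * g ψ * (y ⬝ᵥ ψ) ∂μ := by
  have hint : ∀ i j, Integrable (fun ψ => x i * (ψ i * g ψ * ψ j) * y j) μ := fun i j =>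
    ((hg i j).const_mul _).mul_const _
  have hpt : ∀ ψ : n → ℝ, (x ⬝ᵥ ψ) * g ψ * (y ⬝ᵥ ψ)
      = ∑ i, ∑ j, x i * (ψ i * g ψ * ψ j) * y j := fun ψ => by
    rw [dotProduct, dotProduct, Finset.sum_mul, Finset.sum_mul_sum]
    exact Finset.sum_congr rfl fun i _ => Finset.sum_congr rfl fun j _ => by ring
  simp only [hpt]
  rw [integral_finsetSum _ fun i _ => integrable_finsetSum _ fun j _ => hint i j]
  simp only [dotProduct, mulVec, of_apply, Finset.mul_sum]
  refine Finset.sum_congr rfl fun i _ => ?_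
  rw [integral_finsetSum _ fun j _ => hint i j]
  refine Finset.sum_congr rfl fun j _ => ?_
  rw [integral_mul_const, integral_const_mul]
  ring

namespace HasFiniteFourthMoments

theorem integrable_dotProduct_mul_four (h4 : HasFiniteFourthMoments μ) (a b c d : n → ℝ) :
    Integrable (fun ψ => (a ⬝ᵥ ψ) * (b ⬝ᵥ ψ) * (c ⬝ᵥ ψ) * (d ⬝ᵥ ψ)) μ := by
  have hpt : ∀ ψ : n → ℝ, (a ⬝ᵥ ψ) * (b ⬝ᵥ ψ) * (c ⬝ᵥ ψ) * (d ⬝ᵥ ψ)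
      = ∑ i, ∑ j, ∑ k, ∑ l, (a l * b k * c j * d i) * (ψ l * ψ k * ψ j * ψ i) := fun ψ => by
    simp only [dotProduct, Finset.sum_mul, Finset.mul_sum]
    refine Finset.sum_congr rfl fun i _ => Finset.sum_congr rfl fun j _ =>
      Finset.sum_congr rfl fun k _ => Finset.sum_congr rfl fun l _ => by ring
  simp only [hpt]
  exact integrable_finsetSum _ fun i _ => integrable_finsetSum _ fun j _ =>
    integrable_finsetSum _ fun k _ => integrable_finsetSum _ fun l _ =>
      (h4 l k j i).const_mul _

theorem integrable_mul [IsFiniteMeasure μ] (h4 : HasFiniteFourthMoments μ) (i j : n) :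
    Integrable (fun ψ => ψ i * ψ j) μ := by
  refine ((h4 i j i j).add (integrable_const 1)).mono' (by fun_prop)
    (Filter.Eventually.of_forall fun ψ => ?_)
  show |ψ i * ψ j| ≤ ψ i * ψ j * ψ i * ψ j + 1
  nlinarith [abs_mul_abs_self (ψ i * ψ j), abs_nonneg (ψ i * ψ j)]

theorem integrable_mul_quadForm_mul (h4 : HasFiniteFourthMoments μ) (G : Matrix n n ℝ)
    (i j : n) : Integrable (fun ψ => ψ i * (ψ ⬝ᵥ G *ᵥ ψ) * ψ j) μ := by
  have hpt : ∀ ψ : n → ℝ, ψ i * (ψ ⬝ᵥ G *ᵥ ψ) * ψ j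
      = ∑ k, ∑ l, G k l * (ψ i * ψ k * ψ l * ψ j) := fun ψ => by
    simp only [dotProduct, mulVec, Finset.mul_sum, Finset.sum_mul]
    exact Finset.sum_congr rfl fun k _ => Finset.sum_congr rfl fun l _ => by ring
  simp only [hpt]
  exact integrable_finsetSum _ fun k _ => integrable_finsetSum _ fun l _ =>
    (h4 i k l j).const_mul _

end HasFiniteFourthMoments

theorem dotProduct_secondMomentMatrix_mulVec [IsFiniteMeasure μ] (h4 : HasFiniteFourthMoments μ)
    (x y : n → ℝ) :
    x ⬝ᵥ (secondMomentMatrix μ *ᵥ y) = ∫ ψ, (x ⬝ᵥ ψ) * (y ⬝ᵥ ψ) ∂μ := by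
  simpa [secondMomentMatrix] using dotProduct_integral_outer_mulVec (g := fun _ => 1)
    (by simpa using h4.integrable_mul) x y

theorem dotProduct_fourthMomentMatrix_mulVec (h4 : HasFiniteFourthMoments μ)
    (G : Matrix n n ℝ) (x y : n → ℝ) :
    x ⬝ᵥ (fourthMomentMatrix μ G *ᵥ y) = ∫ ψ, (x ⬝ᵥ ψ) * (ψ ⬝ᵥ G *ᵥ ψ) * (y ⬝ᵥ ψ) ∂μ :=
  dotProduct_integral_outer_mulVec (h4.integrable_mul_quadForm_mul G) x y

theorem fourthMomentMatrix_transpose (G : Matrix n n ℝ) :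
    (fourthMomentMatrix μ G)ᵀ = fourthMomentMatrix μ G := by
  ext i j
  simp only [transpose_apply, fourthMomentMatrix, of_apply]
  congr 1
  ext ψ
  ring

theorem dotProduct_transpose_mul_self_mulVec (B : Matrix n n ℝ) (y : n → ℝ) :
    y ⬝ᵥ (Bᵀ * B) *ᵥ y = ∑ r, (B r ⬝ᵥ y) ^ 2 := by
  rw [← mulVec_mulVec, dotProduct_mulVec, vecMul_transpose, dotProduct]
  simp only [mulVec, sq]

open scoped MatrixOrder in
theorem posSemidef_fourthMomentMatrix_sub [IsProbabilityMeasure μ]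
    (h4 : HasFiniteFourthMoments μ) {G : Matrix n n ℝ} (hG : G.PosSemidef) :
    (fourthMomentMatrix μ G - secondMomentMatrix μ * G * secondMomentMatrix μ).PosSemidef := by
  classical
  have hS : (secondMomentMatrix μ)ᵀ = secondMomentMatrix μ := secondMomentMatrix_transpose μ
  obtain ⟨B, rfl⟩ := CStarAlgebra.nonneg_iff_eq_star_mul_self.mp hG.nonneg
  rw [star_eq_conjTranspose, conjTranspose_eq_transpose_of_trivial]
  refine .of_dotProduct_mulVec_nonneg ?_ fun x => ?_
  · refine IsHermitian.sub ?_ ?_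
    · rw [IsHermitian, conjTranspose_eq_transpose_of_trivial, fourthMomentMatrix_transpose]
    · simpa only [conjTranspose_eq_transpose_of_trivial, hS] using
        isHermitian_conjTranspose_mul_mul (secondMomentMatrix μ)
          (isHermitian_conjTranspose_mul_self B)
  have hsq : ∀ r, Integrable (fun ψ => ((B r ⬝ᵥ ψ) * (x ⬝ᵥ ψ)) ^ 2) μ := fun r => by
    simpa only [sq, mul_assoc] using h4.integrable_dotProduct_mul_four (B r) x (B r) x
  have hSGS : x ⬝ᵥ (secondMomentMatrix μ * (Bᵀ * B) * secondMomentMatrix μ) *ᵥ x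
      = ∑ r, (∫ ψ, (B r ⬝ᵥ ψ) * (x ⬝ᵥ ψ) ∂μ) ^ 2 := by
    rw [← mulVec_mulVec, ← mulVec_mulVec, dotProduct_mulVec, ← mulVec_transpose, hS,
      dotProduct_transpose_mul_self_mulVec]
    simp only [dotProduct_secondMomentMatrix_mulVec h4]
  have hE : x ⬝ᵥ fourthMomentMatrix μ (Bᵀ * B) *ᵥ x
      = ∑ r, ∫ ψ, ((B r ⬝ᵥ ψ) * (x ⬝ᵥ ψ)) ^ 2 ∂μ := by
    rw [dotProduct_fourthMomentMatrix_mulVec h4, ← integral_finsetSum _ fun r _ => hsq r]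
    congr 1
    ext ψ
    rw [dotProduct_transpose_mul_self_mulVec, Finset.mul_sum, Finset.sum_mul]
    exact Finset.sum_congr rfl fun r _ => by ring
  rw [star_trivial, sub_mulVec, dotProduct_sub, hSGS, hE, ← Finset.sum_sub_distrib]
  exact Finset.sum_nonneg fun r _ =>
    sub_nonneg.2 (sq_integral_le_integral_sq (by fun_prop) (hsq r))

end Moments

section Spectral

variable {n : Type*} [Fintype n] {S : Matrix n n ℝ} {u : n → n → ℝ} {lam : n → ℝ}

theorem transpose_eq_of_eq_sum_vecMulVec (hS : S = ∑ k, lam k • vecMulVec (u k) (u k)) :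
    Sᵀ = S := by
  simp only [hS, transpose_sum, transpose_smul, transpose_vecMulVec]

theorem mulVec_eq_smul_of_eq_sum_vecMulVec [DecidableEq n]
    (hS : S = ∑ k, lam k • vecMulVec (u k) (u k))
    (hu : ∀ k l, u k ⬝ᵥ u l = if k = l then (1 : ℝ) else 0) (k : n) :
    S *ᵥ u k = lam k • u k := by
  simp [hS, sum_mulVec, smul_mulVec, vecMulVec_mulVec, hu]

theorem trace_mul_eq_sum_of_eq_sum_vecMulVec (hS : S = ∑ k, lam k • vecMulVec (u k) (u k))
    (G : Matrix n n ℝ) : (S * G).trace = lam ⬝ᵥ fun k => u k ⬝ᵥ G *ᵥ u k := by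
  simp only [hS, Finset.sum_mul, trace_sum, smul_mul_assoc, trace_smul, vecMulVec_mul,
    trace_vecMulVec, smul_eq_mul]
  exact Finset.sum_congr rfl fun k _ => by
    rw [dotProduct_comm, ← dotProduct_mulVec]

end Spectral

section Comparison

variable {n R : Type*} [Fintype n] [CommSemiring R] [PartialOrder R] [IsOrderedRing R]
  {A : Matrix n n R}

theorem mulVec_mono_of_nonneg (hA : ∀ i j, 0 ≤ A i j) : Monotone (A *ᵥ ·) :=
  fun _ _ hxy i => Finset.sum_le_sum fun j _ => mul_le_mul_of_nonneg_left (hxy j) (hA i j)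

theorem le_pow_mulVec_of_le_mulVec [DecidableEq n] (hA : ∀ i j, 0 ≤ A i j) {w : ℕ → n → R}
    (hw : ∀ t, w (t + 1) ≤ A *ᵥ w t) (t : ℕ) : w t ≤ (A ^ t) *ᵥ w 0 := by
  induction t with
  | zero => simp
  | succ t ih =>
    calc w (t + 1) ≤ A *ᵥ w t := hw t
      _ ≤ A *ᵥ ((A ^ t) *ᵥ w 0) := mulVec_mono_of_nonneg hA ih
      _ = (A ^ (t + 1)) *ᵥ w 0 := by rw [mulVec_mulVec, pow_succ']

end Comparison

section Iteration

variable {n : Type*} [Fintype n] [DecidableEq n]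

noncomputable def sgdIterationMatrix (lam : n → ℝ) (η α : ℝ) (m : ℕ) : Matrix n n ℝ :=
  (1 - η • diagonal lam) ^ 2
    + (α * η ^ 2 / m) • (diagonal (fun k => lam k ^ 2) + vecMulVec lam lam)

theorem sgdIterationMatrix_eq (lam : n → ℝ) (η α : ℝ) (m : ℕ) :
    sgdIterationMatrix lam η α m = diagonal (fun k => (1 - η * lam k) ^ 2)
      + (α * η ^ 2 / m) • (diagonal (fun k => lam k ^ 2) + vecMulVec lam lam) := by
  have h : 1 - η • diagonal lam = diagonal (fun k => 1 - η * lam k) := by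
    ext i j
    by_cases hij : i = j <;> simp [hij, one_apply]
  rw [sgdIterationMatrix, h, diagonal_pow]
  rfl

theorem sgdIterationMatrix_nonneg {lam : n → ℝ} (hlam : ∀ k, 0 ≤ lam k) (η : ℝ) {α : ℝ}
    (hα : 0 ≤ α) (m : ℕ) (i j : n) : 0 ≤ sgdIterationMatrix lam η α m i j := by
  rw [sgdIterationMatrix_eq]
  simp only [Matrix.add_apply, Matrix.smul_apply, diagonal_apply, vecMulVec_apply, smul_eq_mul]
  have := hlam i
  have := hlam j
  split_ifs <;> positivity

theorem sgdIterationMatrix_mulVec_apply (lam : n → ℝ) (η α : ℝ) (m : ℕ) (y : n → ℝ) (k : n) :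
    (sgdIterationMatrix lam η α m *ᵥ y) k
      = (1 - η * lam k) ^ 2 * y k + α * η ^ 2 / m * (lam k ^ 2 * y k + lam k * (lam ⬝ᵥ y)) := by
  simp [sgdIterationMatrix_eq, add_mulVec, smul_mulVec, mulVec_diagonal, vecMulVec_mulVec]
  ring

end Iteration

section SGDStep

variable {n : Type*} [Fintype n] {μ : Measure (n → ℝ)}

noncomputable def sgdStep (μ : Measure (n → ℝ)) (S : Matrix n n ℝ) (η : ℝ) (m : ℕ)
    (C : Matrix n n ℝ) : Matrix n n ℝ :=
  C - η • (S * C) - η • (C * S) + (η ^ 2 * ((m : ℝ) - 1) / m) • (S * C * S)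
    + (η ^ 2 / m) • fourthMomentMatrix μ C

theorem sgdStep_eq_mul_mul_add [DecidableEq n] {m : ℕ} (hm : (m : ℝ) ≠ 0)
    (S : Matrix n n ℝ) (η : ℝ) (C : Matrix n n ℝ) :
    sgdStep μ S η m C
      = (1 - η • S) * C * (1 - η • S) + (η ^ 2 / m) • (fourthMomentMatrix μ C - S * C * S) := by
  have hcoef : η ^ 2 * ((m : ℝ) - 1) / m = η * η - η ^ 2 / m := by field_simp
  rw [sgdStep, hcoef]
  simp only [sub_mul, mul_sub, one_mul, mul_one, smul_mul_assoc, mul_smul_comm,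
    smul_smul, smul_sub, sub_smul]
  abel

theorem posSemidef_sgdStep [DecidableEq n] [IsProbabilityMeasure μ]
    (h4 : HasFiniteFourthMoments μ) {m : ℕ} (hm : (m : ℝ) ≠ 0) (η : ℝ) {C : Matrix n n ℝ}
    (hC : C.PosSemidef) : (sgdStep μ (secondMomentMatrix μ) η m C).PosSemidef := by
  have hT : (1 - η • secondMomentMatrix μ)ᴴ = 1 - η • secondMomentMatrix μ := by
    rw [conjTranspose_eq_transpose_of_trivial, transpose_sub, transpose_one, transpose_smul,
      secondMomentMatrix_transpose]
  rw [sgdStep_eq_mul_mul_add hm]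
  have hconj := hC.conjTranspose_mul_mul_same (1 - η • secondMomentMatrix μ)
  rw [hT] at hconj
  have hcoef : 0 ≤ η ^ 2 / m := by positivity
  exact hconj.add ((posSemidef_fourthMomentMatrix_sub h4 hC).smul hcoef)

theorem dotProduct_mulVec_eq_mul_of_mulVec_eq_smul {S : Matrix n n ℝ} (hS : Sᵀ = S)
    {v : n → ℝ} {l : ℝ} (hv : S *ᵥ v = l • v) (z : n → ℝ) :
    v ⬝ᵥ S *ᵥ z = l * (v ⬝ᵥ z) := by
  rw [dotProduct_mulVec, ← mulVec_transpose, hS, hv, smul_dotProduct, smul_eq_mul]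

theorem dotProduct_sgdStep_mulVec_of_mulVec_eq_smul {S : Matrix n n ℝ} (hS : Sᵀ = S)
    {v : n → ℝ} {l : ℝ} (hv : S *ᵥ v = l • v) (η : ℝ) (m : ℕ) (C : Matrix n n ℝ) :
    v ⬝ᵥ sgdStep μ S η m C *ᵥ v
      = (1 - 2 * η * l + η ^ 2 * ((m : ℝ) - 1) / m * l ^ 2) * (v ⬝ᵥ C *ᵥ v)
        + η ^ 2 / m * (v ⬝ᵥ fourthMomentMatrix μ C *ᵥ v) := by
  simp only [sgdStep, add_mulVec, sub_mulVec, smul_mulVec, ← mulVec_mulVec, hv, mulVec_smul,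
    dotProduct_add, dotProduct_sub, dotProduct_smul,
    dotProduct_mulVec_eq_mul_of_mulVec_eq_smul hS hv, smul_eq_mul]
  ring

theorem dotProduct_sgdStep_mulVec_le [DecidableEq n] {S : Matrix n n ℝ} {u : n → n → ℝ}
    {lam : n → ℝ} (hSdiag : S = ∑ k, lam k • vecMulVec (u k) (u k))
    (hu : ∀ k l, u k ⬝ᵥ u l = if k = l then (1 : ℝ) else 0) {α η : ℝ} {m : ℕ}
    (hm : (m : ℝ) ≠ 0) {C : Matrix n n ℝ}
    (hreg : ((α + 1) • (S * C * S) + (α * (S * C).trace) • S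
      - fourthMomentMatrix μ C).PosSemidef) (k : n) :
    u k ⬝ᵥ sgdStep μ S η m C *ᵥ u k
      ≤ (sgdIterationMatrix lam η α m *ᵥ fun j => u j ⬝ᵥ C *ᵥ u j) k := by
  have hS := transpose_eq_of_eq_sum_vecMulVec hSdiag
  have hv := mulVec_eq_smul_of_eq_sum_vecMulVec hSdiag hu k
  have hvS := dotProduct_mulVec_eq_mul_of_mulVec_eq_smul hS hv
  have hvv : u k ⬝ᵥ u k = 1 := by simp [hu]
  have hE : u k ⬝ᵥ fourthMomentMatrix μ C *ᵥ u k
      ≤ (α + 1) * (lam k ^ 2 * (u k ⬝ᵥ C *ᵥ u k))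
        + α * (lam ⬝ᵥ fun j => u j ⬝ᵥ C *ᵥ u j) * lam k := by
    have h := hreg.dotProduct_mulVec_nonneg (u k)
    rw [trace_mul_eq_sum_of_eq_sum_vecMulVec hSdiag] at h
    simp only [star_trivial, sub_mulVec, add_mulVec, smul_mulVec, ← mulVec_mulVec, hv,
      mulVec_smul, dotProduct_sub, dotProduct_add, dotProduct_smul, hvS, hvv, smul_eq_mul] at h
    linarith
  rw [dotProduct_sgdStep_mulVec_of_mulVec_eq_smul hS hv, sgdIterationMatrix_mulVec_apply]
  calc _ ≤ (1 - 2 * η * lam k + η ^ 2 * ((m : ℝ) - 1) / m * lam k ^ 2) * (u k ⬝ᵥ C *ᵥ u k)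
        + η ^ 2 / m * ((α + 1) * (lam k ^ 2 * (u k ⬝ᵥ C *ᵥ u k))
          + α * (lam ⬝ᵥ fun j => u j ⬝ᵥ C *ᵥ u j) * lam k) := by gcongr
    _ = _ := by field_simp; ring

end SGDStep

theorem sgd_loss_regular_fourth_moment_bound_general
    (N : ℕ) (μ : Measure (Fin N → ℝ)) [IsProbabilityMeasure μ]
    (h4 : ∀ i j k l : Fin N, Integrable (fun ψ => ψ i * ψ j * ψ k * ψ l) μ)
    (u : Fin N → (Fin N → ℝ))
    (hu : ∀ k l, u k ⬝ᵥ u l = if k = l then (1 : ℝ) else 0)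
    (lam : Fin N → ℝ) (hlam : ∀ k, 0 ≤ lam k)
    (S : Matrix (Fin N) (Fin N) ℝ)
    (hS : ∀ i j, S i j = ∫ ψ, ψ i * ψ j ∂μ)
    (hSdiag : S = ∑ k, lam k • vecMulVec (u k) (u k))
    (α : ℝ) (hα : 1 ≤ α)
    (hreg : ∀ G : Matrix (Fin N) (Fin N) ℝ, G.PosSemidef →
      (((α + 1) • (S * G * S) + (α * (S * G).trace) • S)
        - Matrix.of (fun i j => ∫ ψ, ψ i * (ψ ⬝ᵥ G.mulVec ψ) * ψ j ∂μ)).PosSemidef)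
    (η : ℝ) (m : ℕ) (hm : 1 ≤ m)
    (Δ : Fin N → ℝ) (C : ℕ → Matrix (Fin N) (Fin N) ℝ)
    (hC0 : C 0 = vecMulVec Δ Δ)
    (hrec : ∀ t, C (t + 1) = C t - η • (S * C t) - η • (C t * S)
        + (η ^ 2 * ((m : ℝ) - 1) / m) • (S * C t * S)
        + (η ^ 2 / m) • Matrix.of (fun i j => ∫ ψ, ψ i * (ψ ⬝ᵥ (C t).mulVec ψ) * ψ j ∂μ)) :
    ∀ t : ℕ,
      (S * C t).trace
        ≤ lam ⬝ᵥ (((1 - η • Matrix.diagonal lam) ^ 2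
            + (α * η ^ 2 / m) • (Matrix.diagonal (fun k => (lam k) ^ 2) + vecMulVec lam lam))
              ^ t).mulVec (fun k => (u k ⬝ᵥ Δ) ^ 2) := by
  obtain rfl : S = secondMomentMatrix μ := Matrix.ext hS
  have hm0 : (m : ℝ) ≠ 0 := by positivity
  have hpsd : ∀ t, (C t).PosSemidef := by
    intro t
    induction t with
    | zero => simpa [hC0] using posSemidef_vecMulVec_self_star Δ
    | succ t ih => rw [hrec t]; exact posSemidef_sgdStep h4 hm0 η ih
  set w : ℕ → Fin N → ℝ := fun t k => u k ⬝ᵥ C t *ᵥ u k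
  have hw : ∀ t, w (t + 1) ≤ sgdIterationMatrix lam η α m *ᵥ w t := fun t k => by
    simp only [w]
    rw [hrec t]
    exact dotProduct_sgdStep_mulVec_le hSdiag hu hm0 (hreg (C t) (hpsd t)) k
  have hw0 : w 0 = fun k => (u k ⬝ᵥ Δ) ^ 2 := by
    ext k
    simp [w, hC0, vecMulVec_mulVec, sq, dotProduct_comm]
  intro t
  rw [trace_mul_eq_sum_of_eq_sum_vecMulVec hSdiag]
  exact dotProduct_le_dotProduct_of_nonneg_left
    (hw0 ▸ le_pow_mulVec_of_le_mulVec (sgdIterationMatrix_nonneg hlam η (by linarith) m) hw t) hlam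

/-- Let `μ` be a probability distribution on `ℝ^N` with finite fourth
moments and second-moment matrix `S = ∑ₖ λₖ uₖ uₖᵀ` (`u₁,…,u_N` orthonormal, `λₖ ≥ 0`).
Suppose there is `α ≥ 1` such that for every PSD symmetric `G`,
`E[ψψᵀ G ψψᵀ] ⪯ (α+1) S G S + α Tr(S G) S` (Loewner order).  If
`C_{t+1} = C_t − η S C_t − η C_t S + η²((m−1)/m) S C_t S + (η²/m) E[ψψᵀ C_t ψψᵀ]` with
`C₀ = Δ Δᵀ` and `vₖ = uₖᵀ Δ`, then for all `t`,
`Tr(S C_t) ≤ λᵀ A_α^t v²` where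
`A_α = (I − η diag(λ))² + (α η²/m)[diag(λ²) + λλᵀ]`. -/
theorem sgd_loss_regular_fourth_moment_bound
    (N : ℕ) (hN : 1 ≤ N) (μ : Measure (Fin N → ℝ)) [IsProbabilityMeasure μ]
    (h4 : ∀ i j k l : Fin N, Integrable (fun ψ => ψ i * ψ j * ψ k * ψ l) μ)
    (u : Fin N → (Fin N → ℝ))
    (hu : ∀ k l, u k ⬝ᵥ u l = if k = l then (1 : ℝ) else 0)
    (lam : Fin N → ℝ) (hlam : ∀ k, 0 ≤ lam k)
    (S : Matrix (Fin N) (Fin N) ℝ)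
    (hS : ∀ i j, S i j = ∫ ψ, ψ i * ψ j ∂μ)
    (hSdiag : S = ∑ k, lam k • vecMulVec (u k) (u k))
    (α : ℝ) (hα : 1 ≤ α)
    (hreg : ∀ G : Matrix (Fin N) (Fin N) ℝ, G.PosSemidef →
      (((α + 1) • (S * G * S) + (α * (S * G).trace) • S)
        - Matrix.of (fun i j => ∫ ψ, ψ i * (ψ ⬝ᵥ G.mulVec ψ) * ψ j ∂μ)).PosSemidef)
    (η : ℝ) (hη : 0 < η) (m : ℕ) (hm : 1 ≤ m)
    (Δ : Fin N → ℝ) (C : ℕ → Matrix (Fin N) (Fin N) ℝ)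
    (hC0 : C 0 = vecMulVec Δ Δ)
    (hrec : ∀ t, C (t + 1) = C t - η • (S * C t) - η • (C t * S)
        + (η ^ 2 * ((m : ℝ) - 1) / m) • (S * C t * S)
        + (η ^ 2 / m) • Matrix.of (fun i j => ∫ ψ, ψ i * (ψ ⬝ᵥ (C t).mulVec ψ) * ψ j ∂μ)) :
    ∀ t : ℕ,
      (S * C t).trace
        ≤ lam ⬝ᵥ (((1 - η • Matrix.diagonal lam) ^ 2
            + (α * η ^ 2 / m) • (Matrix.diagonal (fun k => (lam k) ^ 2) + vecMulVec lam lam))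
              ^ t).mulVec (fun k => (u k ⬝ᵥ Δ) ^ 2) :=
  sgd_loss_regular_fourth_moment_bound_general N μ h4 u hu lam hlam S hS hSdiag α hα hreg η m hm Δ C
    hC0 hrec
end

section
/- Let N ≥ 1, λ, v ∈ ℝ^N with λ having nonnegative entries, η > 0, m > 0, σ ≥ 0, and set A = A(λ,η,m). Suppose every eigenvalue of the symmetric matrix A has absolute value strictly less than 1, and suppose (c_t)_{t∈ℕ} satisfies c_{t+1} = A c_t + (η² σ²/m) λ with c₀ = v². Then I − A is invertible, A^t → 0 as t → ∞, and λᵀ c_t converges to (η² σ²/m) · λᵀ (I − A)^{-1} λ as t → ∞. -/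
open Matrix Filter

open Topology

/-! The matrix `A` is symmetric, so `A ^ t = U diag(μᵢ ^ t) Uᴴ` with `|μᵢ| < 1`, whence `A ^ t → 0`.
Since `1` is not an eigenvalue, the affine recursion `c_{t+1} = A c_t + b` has the fixed point
`c⋆ = (1 - A)⁻¹ b`, and `c_t - c⋆ = A ^ t (c_0 - c⋆) → 0`. -/

theorem spectrum.isUnit_one_sub_of_forall_abs_lt_one {A : Type*} [Ring A] [Algebra ℝ A] {a : A}
    (h : ∀ r ∈ spectrum ℝ a, |r| < 1) : IsUnit (1 - a) := by
  have h1 : (1 : ℝ) ∉ spectrum ℝ a := fun h1 => by simpa using h 1 h1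
  simpa using spectrum.notMem_iff.mp h1

namespace Matrix

variable {n : Type*} [Fintype n] [DecidableEq n]

theorem IsHermitian.tendsto_pow_atTop_nhds_zero {𝕜 : Type*} [RCLike 𝕜] {A : Matrix n n 𝕜}
    (hA : A.IsHermitian) (hspec : ∀ r ∈ spectrum ℝ A, |r| < 1) :
    Tendsto (fun t : ℕ => A ^ t) atTop (𝓝 0) := by
  set conj := Unitary.conjStarAlgAut 𝕜 _ hA.eigenvectorUnitary
  have hpow (t : ℕ) : A ^ t = conj (diagonal ((RCLike.ofReal ∘ hA.eigenvalues) ^ t)) := by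
    rw [← diagonal_pow, map_pow, ← hA.spectral_theorem]
  have hdiag : Tendsto (fun t : ℕ => (RCLike.ofReal ∘ hA.eigenvalues : n → 𝕜) ^ t) atTop (𝓝 0) :=
    tendsto_pi_nhds.2 fun i => by
      simpa using tendsto_pow_atTop_nhds_zero_of_norm_lt_one
        (by simpa using hspec _ (hA.eigenvalues_mem_spectrum_real i) :
          ‖(hA.eigenvalues i : 𝕜)‖ < 1)
  have hconj : Continuous fun d : n → 𝕜 => conj (diagonal d) := by
    simp only [conj, Unitary.conjStarAlgAut_apply]
    fun_prop
  simpa [hpow, Function.comp_def] using (hconj.tendsto 0).comp hdiag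

theorem tendsto_of_mulVec_add_const {R : Type*} [CommRing R] [TopologicalSpace R]
    [IsTopologicalRing R] {A : Matrix n n R} {b x : n → R} (hx : A *ᵥ x + b = x)
    (hA : Tendsto (fun t : ℕ => A ^ t) atTop (𝓝 0)) {c : ℕ → n → R}
    (hrec : ∀ t, c (t + 1) = A *ᵥ c t + b) :
    Tendsto c atTop (𝓝 x) := by
  have hdev (t : ℕ) : c t = x + A ^ t *ᵥ (c 0 - x) := by
    induction t with
    | zero => simp
    | succ t ih =>
      rw [hrec, ih, pow_succ', ← mulVec_mulVec, mulVec_add, add_right_comm, hx]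
  have hcont : Continuous fun M : Matrix n n R => x + M *ᵥ (c 0 - x) := by fun_prop
  simpa [← hdev, Function.comp_def] using (hcont.tendsto 0).comp hA

theorem mulVec_one_sub_inv_mulVec_add_eq {R : Type*} [CommRing R] {A : Matrix n n R}
    (hA : IsUnit (1 - A)) (b : n → R) : A *ᵥ ((1 - A)⁻¹ *ᵥ b) + b = (1 - A)⁻¹ *ᵥ b := by
  have h : (1 - A) *ᵥ ((1 - A)⁻¹ *ᵥ b) = b := by
    rw [mulVec_mulVec, mul_nonsing_inv _ ((isUnit_iff_isUnit_det _).mp hA), one_mulVec]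
  rw [sub_mulVec, one_mulVec] at h
  nth_rw 2 [← h]
  abel

end Matrix

theorem Amat_isHermitian (N : ℕ) (lam : Fin N → ℝ) (η m : ℝ) : (Amat N lam η m).IsHermitian := by
  have hvv : (vecMulVec lam lam).IsHermitian := by
    simpa using (posSemidef_vecMulVec_self_star lam).isHermitian
  exact ((isHermitian_one.sub ((isHermitian_diagonal lam).smul (IsSelfAdjoint.all η))).pow 2).add
    ((isHermitian_diagonal _).smul (IsSelfAdjoint.all _)) |>.add (hvv.smul (IsSelfAdjoint.all _))

theorem noisy_sgd_asymptotic_loss_general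
    (N : ℕ) (lam : Fin N → ℝ)
    (η m σ : ℝ)
    (hspec : ∀ r ∈ spectrum ℝ (Amat N lam η m), |r| < 1)
    (c : ℕ → Fin N → ℝ)
    (hrec : ∀ t, c (t + 1) = (Amat N lam η m).mulVec (c t) + (η ^ 2 * σ ^ 2 / m) • lam) :
    IsUnit (1 - Amat N lam η m)
    ∧ Tendsto (fun t : ℕ => (Amat N lam η m) ^ t) atTop (nhds 0)
    ∧ Tendsto (fun t : ℕ => lam ⬝ᵥ c t) atTop
        (nhds ((η ^ 2 * σ ^ 2 / m) * (lam ⬝ᵥ (1 - Amat N lam η m)⁻¹.mulVec lam))) := by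
  set A := Amat N lam η m
  have hunit : IsUnit (1 - A) := spectrum.isUnit_one_sub_of_forall_abs_lt_one hspec
  have hpow : Tendsto (fun t : ℕ => A ^ t) atTop (𝓝 0) :=
    (Amat_isHermitian N lam η m).tendsto_pow_atTop_nhds_zero hspec
  have hc := tendsto_of_mulVec_add_const (mulVec_one_sub_inv_mulVec_add_eq hunit _) hpow hrec
  refine ⟨hunit, hpow, ?_⟩
  have hdot : Continuous fun x : Fin N → ℝ => lam ⬝ᵥ x := continuous_const.dotProduct continuous_id
  simpa [mulVec_smul, Function.comp_def] using (hdot.tendsto _).comp hc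

/-- With `A = A(λ,η,m)`, suppose every eigenvalue of the symmetric matrix
`A` has absolute value strictly less than `1`, and `c_{t+1} = A c_t + (η² σ²/m) λ` with
`c₀ = v²`.  Then `I − A` is invertible, `A^t → 0`, and
`λᵀ c_t → (η² σ²/m) λᵀ (I − A)⁻¹ λ` as `t → ∞`. -/
theorem noisy_sgd_asymptotic_loss
    (N : ℕ) (hN : 1 ≤ N) (lam v : Fin N → ℝ) (hlam : ∀ k, 0 ≤ lam k)
    (η m σ : ℝ) (hη : 0 < η) (hm : 0 < m) (hσ : 0 ≤ σ)
    (hspec : ∀ r ∈ spectrum ℝ (Amat N lam η m), |r| < 1)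
    (c : ℕ → Fin N → ℝ) (hc0 : c 0 = fun k => (v k) ^ 2)
    (hrec : ∀ t, c (t + 1) = (Amat N lam η m).mulVec (c t) + (η ^ 2 * σ ^ 2 / m) • lam) :
    IsUnit (1 - Amat N lam η m)
    ∧ Tendsto (fun t : ℕ => (Amat N lam η m) ^ t) atTop (nhds 0)
    ∧ Tendsto (fun t : ℕ => lam ⬝ᵥ c t) atTop
        (nhds ((η ^ 2 * σ ^ 2 / m) * (lam ⬝ᵥ (1 - Amat N lam η m)⁻¹.mulVec lam))) :=
  noisy_sgd_asymptotic_loss_general N lam η m σ hspec c hrec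
end

section
/- Let a > 1, b > 0, and 0 < η < 1, and for t ∈ ℕ define S(t) = Σ_{k=1}^∞ k^{-a} (1 − η k^{-b})^{2t} (the series converges since a > 1). Then there exist constants 0 < c₁ ≤ c₂ and T ∈ ℕ such that for all t ≥ T, c₁ · t^{-(a-1)/b} ≤ S(t) ≤ c₂ · t^{-(a-1)/b}. -/
/-!
Let `N ≈ t^(1/b)` be the mode at which `t η k^(-b)` becomes of order one.
For `N < k ≤ 2N` Bernoulli's inequality keeps `(1 - η k^(-b))^(2t)` above `(1 - η)²`, so these
modes alone contribute `≳ N · N^(-a) = N^(1-a)`. From above, the modes `k > N` contribute at most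
`∑_{k > N} k^(-a) ≤ N^(1-a)/(a-1)` (integral test), while for `k ≤ N` the factor is at most
`exp(-2tηk^(-b)) ≤ n!/(2tηk^(-b))^n`; choosing `bn ≥ a`, these `N` modes contribute
`O(t^(-n) N^(bn-a+1)) = O(N^(1-a))`. Finally `N^(1-a) ≍ t^(-(a-1)/b)`.
-/

open Real Finset
open scoped Nat

lemma exp_neg_le_factorial_div_pow {z : ℝ} (hz : 0 < z) (n : ℕ) : exp (-z) ≤ n ! / z ^ n := by
  rw [exp_neg, ← inv_div]
  exact inv_anti₀ (by positivity) (pow_div_factorial_le_exp z hz.le n)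

lemma one_sub_pow_le_factorial_div_pow {y : ℝ} (hy0 : 0 < y) (hy1 : y ≤ 1) {m : ℕ}
    (hm : 0 < m) (n : ℕ) : (1 - y) ^ m ≤ n ! / (m * y) ^ n :=
  calc (1 - y) ^ m ≤ exp (-y) ^ m := pow_le_pow_left₀ (by linarith) (one_sub_le_exp_neg y) m
    _ = exp (-(m * y)) := by rw [← exp_nat_mul]; ring_nf
    _ ≤ n ! / (m * y) ^ n := exp_neg_le_factorial_div_pow (by positivity) n

lemma one_sub_sq_le_one_sub_pow_two_mul {η y : ℝ} {t : ℕ} (hy1 : y ≤ 1)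
    (hη : η ≤ 1) (hty : t * y ≤ η) : (1 - η) ^ 2 ≤ (1 - y) ^ (2 * t) := by
  have bernoulli : 1 - η ≤ (1 - y) ^ t := by
    have := one_add_mul_le_pow (a := -y) (by linarith) t
    rw [← sub_eq_add_neg] at this
    linarith
  rw [mul_comm, pow_mul]
  exact pow_le_pow_left₀ (by linarith) bernoulli 2

lemma tsum_nat_add_rpow_neg_le {a : ℝ} (ha : 1 < a) {N : ℕ} (hN : 0 < N) :
    ∑' k : ℕ, ((k + N + 1 : ℕ) : ℝ) ^ (-a) ≤ (N : ℝ) ^ (1 - a) / (a - 1) := by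
  have hN' : (0 : ℝ) < N := by exact_mod_cast hN
  have anti : AntitoneOn (fun x : ℝ => x ^ (-a)) (Set.Ici (N : ℝ)) := fun x hx y _ hxy =>
    rpow_le_rpow_of_nonpos (hN'.trans_le hx) hxy (by linarith)
  calc ∑' k : ℕ, ((k + N + 1 : ℕ) : ℝ) ^ (-a)
      ≤ ∫ x in Set.Ioi (N : ℝ), x ^ (-a) :=
        anti.tsum_comp_add_le_integral N (integrableOn_Ioi_rpow_of_lt (by linarith) hN')
          fun x hx => rpow_nonneg (hN'.trans hx).le _
    _ = (N : ℝ) ^ (1 - a) / (a - 1) := by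
        rw [integral_Ioi_rpow_of_lt (by linarith) hN', neg_div, ← div_neg]
        ring_nf

lemma exists_nat_between_self_two_mul {x : ℝ} (hx : 1 ≤ x) :
    ∃ N : ℕ, 0 < N ∧ x ≤ N ∧ (N : ℝ) ≤ 2 * x :=
  ⟨⌈x⌉₊, Nat.ceil_pos.mpr (by linarith), Nat.le_ceil x, Nat.ceil_le_two_mul (by linarith)⟩

noncomputable def modeLoss (a b η : ℝ) (t : ℕ) (u : ℝ) : ℝ :=
  u ^ (-a) * (1 - η * u ^ (-b)) ^ (2 * t)

section modeLoss

variable {a b η : ℝ} {t : ℕ}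

lemma modeLoss_nonneg {u : ℝ} (hu : 0 ≤ u) : 0 ≤ modeLoss a b η t u :=
  mul_nonneg (rpow_nonneg hu _) ((even_two_mul t).pow_nonneg _)

lemma mul_rpow_neg_mem_Icc (hη0 : 0 ≤ η) (hη1 : η ≤ 1) (hb : 0 ≤ b) {u : ℝ} (hu : 1 ≤ u) :
    η * u ^ (-b) ∈ Set.Icc 0 1 :=
  ⟨by positivity,
    mul_le_one₀ hη1 (by positivity) (rpow_le_one_of_one_le_of_nonpos hu (by linarith))⟩

lemma modeLoss_le_rpow (hη0 : 0 ≤ η) (hη1 : η ≤ 1) (hb : 0 ≤ b) {u : ℝ} (hu : 1 ≤ u) :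
    modeLoss a b η t u ≤ u ^ (-a) := by
  obtain ⟨hy0, hy1⟩ := mul_rpow_neg_mem_Icc hη0 hη1 hb hu
  exact mul_le_of_le_one_right (by positivity) (pow_le_one₀ (by linarith) (by linarith))

lemma modeLoss_le_factorial_mul_rpow (hη0 : 0 < η) (hη1 : η ≤ 1) (hb : 0 ≤ b) (ht : 0 < t)
    {u : ℝ} (hu : 1 ≤ u) (n : ℕ) :
    modeLoss a b η t u ≤ n ! / (2 * t * η) ^ n * u ^ (b * n - a) := by
  have hu0 : 0 < u := by linarith
  obtain ⟨-, hy1⟩ := mul_rpow_neg_mem_Icc hη0.le hη1 hb hu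
  have decay := one_sub_pow_le_factorial_div_pow (by positivity) hy1 (by omega : 0 < 2 * t) n
  calc modeLoss a b η t u ≤ u ^ (-a) * (n ! / ((2 * t : ℕ) * (η * u ^ (-b))) ^ n) :=
        mul_le_mul_of_nonneg_left decay (by positivity)
    _ = n ! / (2 * t * η) ^ n * (u ^ (-a) / (u ^ (-b)) ^ n) := by push_cast; ring
    _ = n ! / (2 * t * η) ^ n * u ^ (b * n - a) := by
        rw [← rpow_mul_natCast hu0.le, ← rpow_sub hu0]
        ring_nf

lemma summable_modeLoss (ha : 1 < a) (hη0 : 0 ≤ η) (hη1 : η ≤ 1) (hb : 0 ≤ b) :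
    Summable fun k : ℕ => modeLoss a b η t (k + 1) := by
  have hp : Summable fun k : ℕ => ((k + 1 : ℕ) : ℝ) ^ (-a) :=
    (summable_nat_add_iff 1).mpr (Real.summable_nat_rpow.mpr (by linarith))
  refine hp.of_nonneg_of_le (fun k => modeLoss_nonneg (by positivity)) fun k => ?_
  exact_mod_cast modeLoss_le_rpow hη0 hη1 hb (by simp)

lemma le_tsum_modeLoss_of_le_rpow (ha : 1 < a) (hη0 : 0 ≤ η) (hη1 : η ≤ 1) (hb : 0 ≤ b)
    {N : ℕ} (hN : 0 < N) (htN : (t : ℝ) ≤ N ^ b) :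
    (1 - η) ^ 2 * 2 ^ (-a) * (N : ℝ) ^ (1 - a) ≤ ∑' k : ℕ, modeLoss a b η t (k + 1) := by
  have hN' : (0 : ℝ) < N := by exact_mod_cast hN
  have term : ∀ k ∈ Ico N (2 * N),
      (2 * N : ℝ) ^ (-a) * (1 - η) ^ 2 ≤ modeLoss a b η t (k + 1) := by
    intro k hk
    obtain ⟨hNk, hk2N⟩ := mem_Ico.mp hk
    have hNu : (N : ℝ) ≤ k + 1 := by exact_mod_cast hNk.trans k.le_succ
    have hu2N : (k : ℝ) + 1 ≤ 2 * N := by exact_mod_cast hk2N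
    have hu0 : (0 : ℝ) < k + 1 := by positivity
    have hty : (t : ℝ) * (η * ((k : ℝ) + 1) ^ (-b)) ≤ η := by
      have : (t : ℝ) * ((k : ℝ) + 1) ^ (-b) ≤ 1 := by
        rw [rpow_neg hu0.le, ← div_eq_mul_inv]
        exact div_le_one_of_le₀ (htN.trans (rpow_le_rpow hN'.le hNu hb)) (by positivity)
      nlinarith
    exact mul_le_mul (rpow_le_rpow_of_nonpos hu0 hu2N (by linarith))
      (one_sub_sq_le_one_sub_pow_two_mul (mul_rpow_neg_mem_Icc hη0 hη1 hb (by simp)).2 hη1 hty)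
      (by positivity) (by positivity)
  calc (1 - η) ^ 2 * 2 ^ (-a) * (N : ℝ) ^ (1 - a)
        = N * ((2 * N : ℝ) ^ (-a) * (1 - η) ^ 2) := by
        rw [mul_rpow (by norm_num) hN'.le, show 1 - a = -a + 1 by ring,
          rpow_add_one' hN'.le (by linarith)]
        ring
    _ ≤ ∑ k ∈ Ico N (2 * N), modeLoss a b η t (k + 1) := by
        have := card_nsmul_le_sum _ _ _ term
        rwa [Nat.card_Ico, show 2 * N - N = N by omega, nsmul_eq_mul] at this
    _ ≤ ∑' k : ℕ, modeLoss a b η t (k + 1) :=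
        (summable_modeLoss ha hη0 hη1 hb).sum_le_tsum _
          fun k _ => modeLoss_nonneg (by positivity)

lemma sum_range_modeLoss_le (hη0 : 0 < η) (hη1 : η ≤ 1) (hb : 0 ≤ b) (ht : 0 < t) {n : ℕ}
    (hn : a ≤ b * n) (N : ℕ) :
    ∑ k ∈ range N, modeLoss a b η t (k + 1)
      ≤ n ! / (2 * t * η) ^ n * (N : ℝ) ^ (b * n - a + 1) := by
  have term : ∀ k ∈ range N,
      modeLoss a b η t (k + 1) ≤ n ! / (2 * t * η) ^ n * (N : ℝ) ^ (b * n - a) := by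
    intro k hk
    have hkN : (k : ℝ) + 1 ≤ N := by exact_mod_cast mem_range.mp hk
    refine (modeLoss_le_factorial_mul_rpow hη0 hη1 hb ht (by simp) n).trans ?_
    gcongr
  calc ∑ k ∈ range N, modeLoss a b η t (k + 1)
      ≤ N • (n ! / (2 * t * η) ^ n * (N : ℝ) ^ (b * n - a)) := by
        simpa using sum_le_card_nsmul _ _ _ term
    _ = n ! / (2 * t * η) ^ n * (N : ℝ) ^ (b * n - a + 1) := by
        rw [nsmul_eq_mul, rpow_add_one' (Nat.cast_nonneg N) (by linarith)]
        ring

lemma tsum_modeLoss_nat_add_le (ha : 1 < a) (hη0 : 0 ≤ η) (hη1 : η ≤ 1) (hb : 0 ≤ b) {N : ℕ}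
    (hN : 0 < N) :
    ∑' k : ℕ, modeLoss a b η t ((k + N : ℕ) + 1) ≤ (N : ℝ) ^ (1 - a) / (a - 1) := by
  have hp : Summable fun k : ℕ => ((k + N + 1 : ℕ) : ℝ) ^ (-a) :=
    (summable_nat_add_iff (N + 1)).mpr (Real.summable_nat_rpow.mpr (by linarith))
  refine le_trans ?_ (tsum_nat_add_rpow_neg_le ha hN)
  refine (summable_modeLoss ha hη0 hη1 hb).comp_injective (add_left_injective N)
    |>.tsum_le_tsum (fun k => ?_) hp
  exact_mod_cast modeLoss_le_rpow hη0 hη1 hb (by norm_cast; omega)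

lemma le_tsum_modeLoss (ha : 1 < a) (hη0 : 0 ≤ η) (hη1 : η ≤ 1) (hb : 0 ≤ b) {x : ℝ}
    (hx : 1 ≤ x) (htx : (t : ℝ) = x ^ b) :
    (1 - η) ^ 2 * 2 ^ (-a) * 2 ^ (1 - a) * x ^ (1 - a)
      ≤ ∑' k : ℕ, modeLoss a b η t (k + 1) := by
  obtain ⟨N, hN, hxN, hN2x⟩ := exists_nat_between_self_two_mul hx
  refine le_trans ?_ <| le_tsum_modeLoss_of_le_rpow ha hη0 hη1 hb hN <|
    htx ▸ rpow_le_rpow (by linarith) hxN hb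
  rw [mul_assoc _ (2 ^ (1 - a) : ℝ), ← mul_rpow (by norm_num) (by linarith)]
  exact mul_le_mul_of_nonneg_left (rpow_le_rpow_of_nonpos (by positivity) hN2x (by linarith))
    (by positivity)

lemma tsum_modeLoss_le (ha : 1 < a) (hη0 : 0 < η) (hη1 : η ≤ 1) (hb : 0 ≤ b) (ht : 0 < t)
    {n : ℕ} (hn : a ≤ b * n) {x : ℝ} (hx : 1 ≤ x) (htx : (t : ℝ) = x ^ b) :
    ∑' k : ℕ, modeLoss a b η t (k + 1)
      ≤ (n ! * 2 ^ (b * n - a + 1) / (2 * η) ^ n + 1 / (a - 1)) * x ^ (1 - a) := by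
  obtain ⟨N, hN, hxN, hN2x⟩ := exists_nat_between_self_two_mul hx
  have hx0 : 0 < x := by linarith
  rw [← (summable_modeLoss ha hη0.le hη1 hb).sum_add_tsum_nat_add N, add_mul]
  apply add_le_add
  · have hpow : x ^ (b * n - a + 1) = (x ^ b) ^ n * x ^ (1 - a) := by
      rw [← rpow_mul_natCast hx0.le, ← rpow_add hx0]
      ring_nf
    calc ∑ k ∈ range N, modeLoss a b η t (k + 1)
        ≤ n ! / (2 * t * η) ^ n * (N : ℝ) ^ (b * n - a + 1) :=
          sum_range_modeLoss_le hη0 hη1 hb ht hn N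
      _ ≤ n ! / (2 * t * η) ^ n * (2 * x) ^ (b * n - a + 1) := by
          gcongr
      _ = n ! * 2 ^ (b * n - a + 1) / (2 * η) ^ n * x ^ (1 - a) := by
          rw [mul_rpow (by norm_num) hx0.le, hpow, htx]
          field_simp
          ring
  · calc ∑' k : ℕ, modeLoss a b η t ((k + N : ℕ) + 1)
        ≤ (N : ℝ) ^ (1 - a) / (a - 1) := tsum_modeLoss_nat_add_le ha hη0.le hη1 hb hN
      _ ≤ x ^ (1 - a) / (a - 1) :=
          div_le_div_of_nonneg_right (rpow_le_rpow_of_nonpos hx0 hxN (by linarith)) (by linarith)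
      _ = 1 / (a - 1) * x ^ (1 - a) := by ring

end modeLoss

/-- Let `a > 1`, `b > 0`, `0 < η < 1`, and for `t ∈ ℕ` set
`S(t) = ∑_{k=1}^∞ k^(−a) (1 − η k^(−b))^(2t)` (indexed below by `k+1` over `k : ℕ`).
Then there are constants `0 < c₁ ≤ c₂` and `T` such that for all `t ≥ T`,
`c₁ t^(−(a−1)/b) ≤ S(t) ≤ c₂ t^(−(a−1)/b)`: the power-law test loss scaling. -/
theorem power_law_loss_scaling (a b η : ℝ) (ha : 1 < a) (hb : 0 < b)
    (hη0 : 0 < η) (hη1 : η < 1) :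
    ∃ c₁ c₂ : ℝ, ∃ T : ℕ, 0 < c₁ ∧ c₁ ≤ c₂ ∧
      ∀ t : ℕ, T ≤ t →
        c₁ * (t : ℝ) ^ (-((a - 1) / b))
            ≤ (∑' k : ℕ, ((k : ℝ) + 1) ^ (-a) * (1 - η * ((k : ℝ) + 1) ^ (-b)) ^ (2 * t))
        ∧ (∑' k : ℕ, ((k : ℝ) + 1) ^ (-a) * (1 - η * ((k : ℝ) + 1) ^ (-b)) ^ (2 * t))
            ≤ c₂ * (t : ℝ) ^ (-((a - 1) / b)) := by
  obtain ⟨n, hn⟩ : ∃ n : ℕ, a ≤ b * n := by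
    obtain ⟨n, hn⟩ := exists_nat_ge (a / b)
    exact ⟨n, (div_le_iff₀' hb).mp hn⟩
  set c₁ : ℝ := (1 - η) ^ 2 * 2 ^ (-a) * 2 ^ (1 - a)
  set C : ℝ := n ! * 2 ^ (b * n - a + 1) / (2 * η) ^ n + 1 / (a - 1)
  have hc₁ : 0 < c₁ := by
    have : 0 < 1 - η := by linarith
    positivity
  refine ⟨c₁, max c₁ C, 1, hc₁, le_max_left _ _, fun t ht => ?_⟩
  have ht0 : (0 : ℝ) < t := by exact_mod_cast ht
  set x : ℝ := (t : ℝ) ^ (1 / b)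
  have htx : (t : ℝ) = x ^ b := by rw [← rpow_mul ht0.le, one_div_mul_cancel hb.ne', rpow_one]
  have hx : 1 ≤ x := one_le_rpow (by exact_mod_cast ht) (by positivity)
  have hscale : (t : ℝ) ^ (-((a - 1) / b)) = x ^ (1 - a) := by
    rw [← rpow_mul ht0.le]
    congr 1
    field_simp
    ring
  rw [hscale]
  refine ⟨le_tsum_modeLoss ha hη0.le hη1.le hb.le hx htx, ?_⟩
  refine (tsum_modeLoss_le ha hη0 hη1.le hb.le ht hn hx htx).trans ?_
  exact mul_le_mul_of_nonneg_right (le_max_right _ _) (by positivity)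
end
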